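/- arXiv:2308.04133 — 13 statements merged into one kernel-verified Lean document; each statement's English description precedes it below -/
import Mathlib

section
/- Let p = (p₀,p₁,p₂,p₃) be a probability vector, s ∈ [0,1], and n = (n₁,n₂,n₃) ∈ ℝ³ a unit vector. If the compatibility condition holds — namely s·n_i = 0 whenever P_i = 0, and the sum of s²n_i²/P_i² over those i with P_i ≠ 0 is at most 1 — then s ≤ max{P₁, P₂, P₃}. -/
/-! Since `Pᵢ ≤ M := max Pᵢ`, each `s²nᵢ²` is at most `M²` times its compatibility term
(both vanish when `Pᵢ = 0`). Summing over `i` and using `|n| = 1` gives `s² ≤ M²`. -/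

lemma sq_le_sq_mul_ite_div_sq {P M x : ℝ} (hP : 0 ≤ P) (hPM : P ≤ M) (hx : P = 0 → x = 0) :
    x ^ 2 ≤ M ^ 2 * if P = 0 then 0 else x ^ 2 / P ^ 2 := by
  split_ifs with hP0
  · simp [hx hP0]
  · have hPpos : 0 < P ^ 2 := by positivity
    rw [mul_div_assoc', le_div_iff₀ hPpos, mul_comm]
    exact mul_le_mul_of_nonneg_right (pow_le_pow_left₀ hP hPM 2) (sq_nonneg x)

theorem sharpness_le_Pmax_general (p₀ p₁ p₂ p₃ s n₁ n₂ n₃ : ℝ)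
    (hn : n₁ ^ 2 + n₂ ^ 2 + n₃ ^ 2 = 1)
    (P₁ P₂ P₃ : ℝ)
    (hP₁ : P₁ = 2 * (Real.sqrt (p₀ * p₁) + Real.sqrt (p₂ * p₃)))
    (hP₂ : P₂ = 2 * (Real.sqrt (p₀ * p₂) + Real.sqrt (p₁ * p₃)))
    (hP₃ : P₃ = 2 * (Real.sqrt (p₀ * p₃) + Real.sqrt (p₁ * p₂)))
    (hz₁ : P₁ = 0 → s * n₁ = 0)
    (hz₂ : P₂ = 0 → s * n₂ = 0)
    (hz₃ : P₃ = 0 → s * n₃ = 0)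
    (hcompat : (if P₁ = 0 then 0 else s ^ 2 * n₁ ^ 2 / P₁ ^ 2) +
               (if P₂ = 0 then 0 else s ^ 2 * n₂ ^ 2 / P₂ ^ 2) +
               (if P₃ = 0 then 0 else s ^ 2 * n₃ ^ 2 / P₃ ^ 2) ≤ 1) :
    s ≤ max (max P₁ P₂) P₃ := by
  have hP₁0 : 0 ≤ P₁ := hP₁ ▸ by positivity
  have hP₂0 : 0 ≤ P₂ := hP₂ ▸ by positivity
  have hP₃0 : 0 ≤ P₃ := hP₃ ▸ by positivity
  set M := max (max P₁ P₂) P₃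
  simp only [← mul_pow] at hcompat
  have hs : s ^ 2 ≤ M ^ 2 :=
    calc s ^ 2 = (s * n₁) ^ 2 + (s * n₂) ^ 2 + (s * n₃) ^ 2 := by linear_combination -s ^ 2 * hn
      _ ≤ M ^ 2 * ((if P₁ = 0 then 0 else (s * n₁) ^ 2 / P₁ ^ 2) +
            (if P₂ = 0 then 0 else (s * n₂) ^ 2 / P₂ ^ 2) +
            (if P₃ = 0 then 0 else (s * n₃) ^ 2 / P₃ ^ 2)) := by
        rw [mul_add, mul_add]
        gcongr
        · exact sq_le_sq_mul_ite_div_sq hP₁0 (le_max_of_le_left (le_max_left _ _)) hz₁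
        · exact sq_le_sq_mul_ite_div_sq hP₂0 (le_max_of_le_left (le_max_right _ _)) hz₂
        · exact sq_le_sq_mul_ite_div_sq hP₃0 (le_max_right _ _) hz₃
      _ ≤ M ^ 2 := mul_le_of_le_one_right (sq_nonneg M) hcompat
  exact (abs_le_of_sq_le_sq hs (le_max_of_le_right hP₃0)).trans' (le_abs_self s)

/-- If the measurement `𝓜_{s,n}` (sharpness `s ∈ [0,1]`, unit direction
`n = (n₁,n₂,n₃)`) is compatible with the Pauli channel of probability vector
`p = (p₀,p₁,p₂,p₃)` — i.e. `s·nᵢ = 0` whenever `Pᵢ = 0` and the sum of `s²nᵢ²/Pᵢ²`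
over the `i` with `Pᵢ ≠ 0` is at most `1` — then `s ≤ max {P₁, P₂, P₃}`. -/
theorem sharpness_le_Pmax (p₀ p₁ p₂ p₃ s n₁ n₂ n₃ : ℝ)
    (h₀ : 0 ≤ p₀) (h₁ : 0 ≤ p₁) (h₂ : 0 ≤ p₂) (h₃ : 0 ≤ p₃)
    (hsum : p₀ + p₁ + p₂ + p₃ = 1)
    (hs0 : 0 ≤ s) (hs1 : s ≤ 1)
    (hn : n₁ ^ 2 + n₂ ^ 2 + n₃ ^ 2 = 1)
    (P₁ P₂ P₃ : ℝ)
    (hP₁ : P₁ = 2 * (Real.sqrt (p₀ * p₁) + Real.sqrt (p₂ * p₃)))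
    (hP₂ : P₂ = 2 * (Real.sqrt (p₀ * p₂) + Real.sqrt (p₁ * p₃)))
    (hP₃ : P₃ = 2 * (Real.sqrt (p₀ * p₃) + Real.sqrt (p₁ * p₂)))
    (hz₁ : P₁ = 0 → s * n₁ = 0)
    (hz₂ : P₂ = 0 → s * n₂ = 0)
    (hz₃ : P₃ = 0 → s * n₃ = 0)
    (hcompat : (if P₁ = 0 then 0 else s ^ 2 * n₁ ^ 2 / P₁ ^ 2) +
               (if P₂ = 0 then 0 else s ^ 2 * n₂ ^ 2 / P₂ ^ 2) +
               (if P₃ = 0 then 0 else s ^ 2 * n₃ ^ 2 / P₃ ^ 2) ≤ 1) :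
    s ≤ max (max P₁ P₂) P₃ :=
  sharpness_le_Pmax_general p₀ p₁ p₂ p₃ s n₁ n₂ n₃ hn P₁ P₂ P₃ hP₁ hP₂ hP₃ hz₁ hz₂ hz₃ hcompat
end

section
/- Let p = (p₀,p₁,p₂,p₃) be a probability vector and n = (n₁,n₂,n₃) ∈ ℝ³ a unit vector having at least two nonzero components. If the compatibility condition with sharpness s = 1 holds — namely n_i = 0 whenever P_i = 0, and the sum of n_i²/P_i² over those i with P_i ≠ 0 is at most 1 — then p₀ = p₁ = p₂ = p₃ = 1/4. -/
lemma amgm_aux (a b : ℝ) (ha : 0 ≤ a) (hb : 0 ≤ b) :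
    2 * Real.sqrt (a * b) ≤ a + b := by
  have h1 := Real.sq_sqrt ha
  have h2 := Real.sq_sqrt hb
  have h3 : Real.sqrt (a * b) = Real.sqrt a * Real.sqrt b := Real.sqrt_mul ha b
  nlinarith [sq_nonneg (Real.sqrt a - Real.sqrt b)]

lemma amgm_eq_aux (a b : ℝ) (ha : 0 ≤ a) (hb : 0 ≤ b)
    (h : 2 * Real.sqrt (a * b) = a + b) : a = b := by
  have hs := Real.sq_sqrt (mul_nonneg ha hb)
  have h0 : (a - b) ^ 2 = 0 := by nlinarith
  have := sq_eq_zero_iff.mp h0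
  linarith

/-- If a sharp (`s = 1`) unbiased binary qubit measurement whose direction
`n = (n₁,n₂,n₃)` is a unit vector with at least two nonzero components is compatible with
the Pauli channel of the probability vector `p = (p₀,p₁,p₂,p₃)` — i.e. `nᵢ = 0` whenever
`Pᵢ = 0` and the sum of `nᵢ²/Pᵢ²` over the `i` with `Pᵢ ≠ 0` is at most `1` — then
`p₀ = p₁ = p₂ = p₃ = 1/4`. -/
theorem sharp_offaxis_forces_center (p₀ p₁ p₂ p₃ n₁ n₂ n₃ : ℝ)
    (h₀ : 0 ≤ p₀) (h₁ : 0 ≤ p₁) (h₂ : 0 ≤ p₂) (h₃ : 0 ≤ p₃)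
    (hsum : p₀ + p₁ + p₂ + p₃ = 1)
    (hn : n₁ ^ 2 + n₂ ^ 2 + n₃ ^ 2 = 1)
    (htwo : (n₁ ≠ 0 ∧ n₂ ≠ 0) ∨ (n₁ ≠ 0 ∧ n₃ ≠ 0) ∨ (n₂ ≠ 0 ∧ n₃ ≠ 0))
    (P₁ P₂ P₃ : ℝ)
    (hP₁ : P₁ = 2 * (Real.sqrt (p₀ * p₁) + Real.sqrt (p₂ * p₃)))
    (hP₂ : P₂ = 2 * (Real.sqrt (p₀ * p₂) + Real.sqrt (p₁ * p₃)))
    (hP₃ : P₃ = 2 * (Real.sqrt (p₀ * p₃) + Real.sqrt (p₁ * p₂)))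
    (hz₁ : P₁ = 0 → n₁ = 0)
    (hz₂ : P₂ = 0 → n₂ = 0)
    (hz₃ : P₃ = 0 → n₃ = 0)
    (hcompat : (if P₁ = 0 then 0 else n₁ ^ 2 / P₁ ^ 2) +
               (if P₂ = 0 then 0 else n₂ ^ 2 / P₂ ^ 2) +
               (if P₃ = 0 then 0 else n₃ ^ 2 / P₃ ^ 2) ≤ 1) :
    p₀ = 1 / 4 ∧ p₁ = 1 / 4 ∧ p₂ = 1 / 4 ∧ p₃ = 1 / 4 := by
  -- nonnegativity and upper bounds for Pᵢ
  have hP₁n : 0 ≤ P₁ := by rw [hP₁]; positivity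
  have hP₂n : 0 ≤ P₂ := by rw [hP₂]; positivity
  have hP₃n : 0 ≤ P₃ := by rw [hP₃]; positivity
  have hP₁le : P₁ ≤ 1 := by
    rw [hP₁]
    have a1 := amgm_aux p₀ p₁ h₀ h₁
    have a2 := amgm_aux p₂ p₃ h₂ h₃
    linarith
  have hP₂le : P₂ ≤ 1 := by
    rw [hP₂]
    have a1 := amgm_aux p₀ p₂ h₀ h₂
    have a2 := amgm_aux p₁ p₃ h₁ h₃
    linarith
  have hP₃le : P₃ ≤ 1 := by
    rw [hP₃]
    have a1 := amgm_aux p₀ p₃ h₀ h₃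
    have a2 := amgm_aux p₁ p₂ h₁ h₂
    linarith
  -- each term bounded below by nᵢ²
  have bnd : ∀ (P n : ℝ), 0 ≤ P → P ≤ 1 → (P = 0 → n = 0) →
      n ^ 2 ≤ (if P = 0 then 0 else n ^ 2 / P ^ 2) := by
    intro P n hPn hPle hz
    by_cases h : P = 0
    · simp [h, hz h]
    · simp only [h, if_false]
      have hPpos : 0 < P := lt_of_le_of_ne hPn (Ne.symm h)
      rw [le_div_iff₀ (by positivity)]
      have hP2 : P ^ 2 ≤ 1 := by nlinarith
      nlinarith [mul_le_mul_of_nonneg_left hP2 (sq_nonneg n)]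
  have b₁ := bnd P₁ n₁ hP₁n hP₁le hz₁
  have b₂ := bnd P₂ n₂ hP₂n hP₂le hz₂
  have b₃ := bnd P₃ n₃ hP₃n hP₃le hz₃
  -- if nᵢ ≠ 0 then Pᵢ = 1
  have Pone : ∀ (P n : ℝ) (hPn : 0 ≤ P) (hPle : P ≤ 1) (hz : P = 0 → n = 0),
      n ≠ 0 → (if P = 0 then (0:ℝ) else n ^ 2 / P ^ 2) ≤ n ^ 2 → P = 1 := by
    intro P n hPn hPle hz hne hle
    have hP0 : P ≠ 0 := fun h => hne (hz h)
    rw [if_neg hP0] at hle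
    have hPpos : 0 < P := lt_of_le_of_ne hPn (Ne.symm hP0)
    have hn2 : 0 < n ^ 2 := by positivity
    have h1 : n ^ 2 ≤ n ^ 2 * P ^ 2 := by
      rw [div_le_iff₀ (by positivity)] at hle; linarith
    have hP2 : 1 ≤ P ^ 2 := by
      by_contra hc
      push_neg at hc
      have := mul_lt_mul_of_pos_left hc hn2
      simp at this
      linarith
    have hPP : P * P ≤ P * 1 := mul_le_mul_of_nonneg_left hPle hPn
    have hsq : P ^ 2 = P * P := pow_two P
    linarith
  -- equality case: if Pᵢ = 1 extract pairwise equalities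
  have eq₁ : P₁ = 1 → p₀ = p₁ ∧ p₂ = p₃ := by
    intro h
    rw [hP₁] at h
    have a1 := amgm_aux p₀ p₁ h₀ h₁
    have a2 := amgm_aux p₂ p₃ h₂ h₃
    constructor
    · exact amgm_eq_aux p₀ p₁ h₀ h₁ (by linarith)
    · exact amgm_eq_aux p₂ p₃ h₂ h₃ (by linarith)
  have eq₂ : P₂ = 1 → p₀ = p₂ ∧ p₁ = p₃ := by
    intro h
    rw [hP₂] at h
    have a1 := amgm_aux p₀ p₂ h₀ h₂
    have a2 := amgm_aux p₁ p₃ h₁ h₃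
    constructor
    · exact amgm_eq_aux p₀ p₂ h₀ h₂ (by linarith)
    · exact amgm_eq_aux p₁ p₃ h₁ h₃ (by linarith)
  have eq₃ : P₃ = 1 → p₀ = p₃ ∧ p₁ = p₂ := by
    intro h
    rw [hP₃] at h
    have a1 := amgm_aux p₀ p₃ h₀ h₃
    have a2 := amgm_aux p₁ p₂ h₁ h₂
    constructor
    · exact amgm_eq_aux p₀ p₃ h₀ h₃ (by linarith)
    · exact amgm_eq_aux p₁ p₂ h₁ h₂ (by linarith)
  rcases htwo with ⟨hn1, hn2⟩ | ⟨hn1, hn3⟩ | ⟨hn2, hn3⟩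
  · have e1 := eq₁ (Pone P₁ n₁ hP₁n hP₁le hz₁ hn1 (by linarith))
    have e2 := eq₂ (Pone P₂ n₂ hP₂n hP₂le hz₂ hn2 (by linarith))
    refine ⟨?_, ?_, ?_, ?_⟩ <;> linarith [e1.1, e1.2, e2.1, e2.2]
  · have e1 := eq₁ (Pone P₁ n₁ hP₁n hP₁le hz₁ hn1 (by linarith))
    have e3 := eq₃ (Pone P₃ n₃ hP₃n hP₃le hz₃ hn3 (by linarith))
    refine ⟨?_, ?_, ?_, ?_⟩ <;> linarith [e1.1, e1.2, e3.1, e3.2]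
  · have e2 := eq₂ (Pone P₂ n₂ hP₂n hP₂le hz₂ hn2 (by linarith))
    have e3 := eq₃ (Pone P₃ n₃ hP₃n hP₃le hz₃ hn3 (by linarith))
    refine ⟨?_, ?_, ?_, ?_⟩ <;> linarith [e2.1, e2.2, e3.1, e3.2]
end

section
/- For a probability vector p = (p₀,p₁,p₂,p₃), one has P₁ = P₂ = P₃ = 1 if and only if p₀ = p₁ = p₂ = p₃ = 1/4. -/
/-- For a probability vector `p = (p₀,p₁,p₂,p₃)`, one has
`P₁ = P₂ = P₃ = 1` iff `p₀ = p₁ = p₂ = p₃ = 1/4`. -/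
theorem Pi_all_one_iff_center (p₀ p₁ p₂ p₃ : ℝ)
    (h₀ : 0 ≤ p₀) (h₁ : 0 ≤ p₁) (h₂ : 0 ≤ p₂) (h₃ : 0 ≤ p₃)
    (hsum : p₀ + p₁ + p₂ + p₃ = 1) :
    (2 * (Real.sqrt (p₀ * p₁) + Real.sqrt (p₂ * p₃)) = 1 ∧
     2 * (Real.sqrt (p₀ * p₂) + Real.sqrt (p₁ * p₃)) = 1 ∧
     2 * (Real.sqrt (p₀ * p₃) + Real.sqrt (p₁ * p₂)) = 1) ↔
    (p₀ = 1 / 4 ∧ p₁ = 1 / 4 ∧ p₂ = 1 / 4 ∧ p₃ = 1 / 4) := by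
  constructor
  · rintro ⟨hA, hB, hC⟩
    set a := Real.sqrt p₀ with hadef
    set b := Real.sqrt p₁ with hbdef
    set c := Real.sqrt p₂ with hcdef
    set d := Real.sqrt p₃ with hddef
    have ha2 : a ^ 2 = p₀ := Real.sq_sqrt h₀
    have hb2 : b ^ 2 = p₁ := Real.sq_sqrt h₁
    have hc2 : c ^ 2 = p₂ := Real.sq_sqrt h₂
    have hd2 : d ^ 2 = p₃ := Real.sq_sqrt h₃
    rw [Real.sqrt_mul h₀, Real.sqrt_mul h₂] at hA
    rw [Real.sqrt_mul h₀, Real.sqrt_mul h₁] at hB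
    have hsq : a ^ 2 + b ^ 2 + c ^ 2 + d ^ 2 = 1 := by
      rw [ha2, hb2, hc2, hd2]; exact hsum
    have key1 : (a - b) ^ 2 + (c - d) ^ 2 = 0 := by linear_combination hsq - hA
    have key2 : (a - c) ^ 2 + (b - d) ^ 2 = 0 := by linear_combination hsq - hB
    have hab : a = b := by
      have := le_antisymm (by linarith [sq_nonneg (c - d)]) (sq_nonneg (a - b))
      have := pow_eq_zero_iff (n := 2) two_ne_zero |>.mp this
      linarith
    have hcd : c = d := by
      have := le_antisymm (by linarith [sq_nonneg (a - b)]) (sq_nonneg (c - d))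
      have := pow_eq_zero_iff (n := 2) two_ne_zero |>.mp this
      linarith
    have hac : a = c := by
      have := le_antisymm (by linarith [sq_nonneg (b - d)]) (sq_nonneg (a - c))
      have := pow_eq_zero_iff (n := 2) two_ne_zero |>.mp this
      linarith
    have e01 : p₀ = p₁ := by rw [← ha2, ← hb2, hab]
    have e02 : p₀ = p₂ := by rw [← ha2, ← hc2, hac]
    have e23 : p₂ = p₃ := by rw [← hc2, ← hd2, hcd]
    refine ⟨by linarith, by linarith, by linarith, by linarith⟩
  · rintro ⟨e0, e1, e2, e3⟩
    subst e0 e1 e2 e3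
    have h : Real.sqrt ((1:ℝ) / 4 * (1 / 4)) = 1 / 4 := by
      rw [Real.sqrt_mul_self (by norm_num)]
    rw [h]; norm_num
end

section
/- For every s ∈ [0,1], the probability vector p = (p₀,p₁,p₂,p₃) with p₁ = p₂ = p₃ = (1 + s − √(1 + 2s − 3s²))/8 and p₀ = 1 − 3p₁ is a valid probability vector and satisfies P₁ = P₂ = P₃ = s. -/
/-- Remark 1: For every `s ∈ [0,1]`, the vector
`p = (p₀,p₁,p₁,p₁)` with `p₁ = (1 + s − √(1 + 2s − 3s²))/8` and `p₀ = 1 − 3p₁`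
is a valid probability vector and satisfies `P₁ = P₂ = P₃ = s`. -/
theorem remark1_boundary_channel (s : ℝ) (hs0 : 0 ≤ s) (hs1 : s ≤ 1)
    (p₀ p₁ : ℝ)
    (hp₁ : p₁ = (1 + s - Real.sqrt (1 + 2 * s - 3 * s ^ 2)) / 8)
    (hp₀ : p₀ = 1 - 3 * p₁) :
    (0 ≤ p₀ ∧ 0 ≤ p₁ ∧ p₀ + p₁ + p₁ + p₁ = 1) ∧
    2 * (Real.sqrt (p₀ * p₁) + Real.sqrt (p₁ * p₁)) = s ∧
    2 * (Real.sqrt (p₀ * p₁) + Real.sqrt (p₁ * p₁)) = s ∧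
    2 * (Real.sqrt (p₀ * p₁) + Real.sqrt (p₁ * p₁)) = s := by
  set r := Real.sqrt (1 + 2 * s - 3 * s ^ 2) with hr
  have hnn : (0:ℝ) ≤ 1 + 2 * s - 3 * s ^ 2 := by nlinarith
  have hr0 : 0 ≤ r := Real.sqrt_nonneg _
  have hr2 : r ^ 2 = 1 + 2 * s - 3 * s ^ 2 := Real.sq_sqrt hnn
  have hrle : r ≤ 1 + s := by nlinarith [sq_nonneg s]
  have hp1nn : 0 ≤ p₁ := by rw [hp₁]; linarith
  have hrge : 3 * s - 1 + r ≥ 0 := by nlinarith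
  have hp0nn : 0 ≤ p₀ := by rw [hp₀, hp₁]; linarith
  have hsq : Real.sqrt (p₁ * p₁) = p₁ := Real.sqrt_mul_self hp1nn
  have hsq0 : Real.sqrt (p₀ * p₁) = (3 * s - 1 + r) / 8 := by
    rw [show p₀ * p₁ = ((3 * s - 1 + r) / 8) ^ 2 by rw [hp₀, hp₁]; nlinarith,
      Real.sqrt_sq (by linarith)]
  have key : 2 * (Real.sqrt (p₀ * p₁) + Real.sqrt (p₁ * p₁)) = s := by
    rw [hsq, hsq0, hp₁]; ring
  exact ⟨⟨hp0nn, hp1nn, by rw [hp₀]; ring⟩, key, key, key⟩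
end

section
/- For every probability vector p = (p₀,p₁,p₂,p₃), the quantumness Q(p) := (p₀↓ − p₁↓)² + (p₂↓ − p₃↓)² satisfies Q(p) + (max{P₁, P₂, P₃})² ≤ 1, where p↓ denotes p sorted in non-increasing order. -/
/-- If `(a,b,c,d)` and `(x,y,z,w)` have the same elementary symmetric functions,
and `x ≥ y ≥ z ≥ w`, then `a*b + c*d ≤ x*y + z*w` (resolvent-cubic root argument). -/
theorem pairing_le_aux (a b c d x y z w : ℝ)
    (he1 : a+b+c+d = x+y+z+w)
    (he2 : a*b+a*c+a*d+b*c+b*d+c*d = x*y+x*z+x*w+y*z+y*w+z*w)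
    (he3 : a*b*c+a*b*d+a*c*d+b*c*d = x*y*z+x*y*w+x*z*w+y*z*w)
    (he4 : a*b*c*d = x*y*z*w)
    (hxy : y ≤ x) (hyz : z ≤ y) (hzw : w ≤ z) :
    a*b+c*d ≤ x*y+z*w := by
  set T : ℝ := a*b+c*d with hT
  have key : (T - (x*y+z*w))*(T-(x*z+y*w))*(T-(x*w+y*z)) = 0 := by
    have h2 : (T - (x*y+z*w))*(T-(x*z+y*w))*(T-(x*w+y*z))
        = (T-(a*b+c*d))*(T-(a*c+b*d))*(T-(a*d+b*c)) := by
      linear_combination ((a*b*c*d)*((a+b+c+d)+(x+y+z+w)) - T*(x*y*z+x*y*w+x*z*w+y*z*w)) * he1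
        + (T^2 - 4*(a*b*c*d)) * he2
        + ((a*b*c+a*b*d+a*c*d+b*c*d)+(x*y*z+x*y*w+x*z*w+y*z*w) - T*(a+b+c+d)) * he3
        + (4*T + (x+y+z+w)^2 - 4*(x*y+x*z+x*w+y*z+y*w+z*w)) * he4
    rw [h2, hT]; ring
  by_contra hcon
  push_neg at hcon
  have f1 : 0 < T - (x*y+z*w) := by linarith
  have f2 : 0 < T - (x*z+y*w) := by
    nlinarith [mul_nonneg (sub_nonneg.2 (hzw.trans (hyz.trans hxy)) : (0:ℝ) ≤ x - w)
      (sub_nonneg.2 hyz)]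
  have f3 : 0 < T - (x*w+y*z) := by
    nlinarith [mul_nonneg (sub_nonneg.2 (hyz.trans hxy) : (0:ℝ) ≤ x - z)
      (sub_nonneg.2 (hzw.trans hyz))]
  nlinarith [mul_pos (mul_pos f1 f2) f3]

/-- If `0 ≤ u,v,r,s`, `u+v ≤ r+s` and `uv = rs`, then `√u+√v ≤ √r+√s`. -/
theorem sqrt_pair_le_aux (u v r s : ℝ) (hu : 0 ≤ u) (hv : 0 ≤ v) (hr : 0 ≤ r) (hs : 0 ≤ s)
    (hsum : u + v ≤ r + s) (hprod : u * v = r * s) :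
    Real.sqrt u + Real.sqrt v ≤ Real.sqrt r + Real.sqrt s := by
  have hu2 : (Real.sqrt u)^2 = u := Real.sq_sqrt hu
  have hv2 : (Real.sqrt v)^2 = v := Real.sq_sqrt hv
  have hr2 : (Real.sqrt r)^2 = r := Real.sq_sqrt hr
  have hs2 : (Real.sqrt s)^2 = s := Real.sq_sqrt hs
  have hcross : Real.sqrt u * Real.sqrt v = Real.sqrt r * Real.sqrt s := by
    rw [← Real.sqrt_mul hu, ← Real.sqrt_mul hr, hprod]
  nlinarith [Real.sqrt_nonneg u, Real.sqrt_nonneg v, Real.sqrt_nonneg r, Real.sqrt_nonneg s,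
    sq_nonneg (Real.sqrt u + Real.sqrt v), sq_nonneg (Real.sqrt r + Real.sqrt s - Real.sqrt u - Real.sqrt v)]

/-- AM–GM: `2√(xy) ≤ x + y` for nonnegative `x, y`. -/
theorem two_sqrt_mul_le_aux (x y : ℝ) (hx : 0 ≤ x) (hy : 0 ≤ y) :
    2 * Real.sqrt (x*y) ≤ x + y := by
  nlinarith [Real.sq_sqrt (mul_nonneg hx hy), Real.sqrt_nonneg (x*y), sq_nonneg (x - y),
    sq_nonneg (x + y - 2 * Real.sqrt (x*y))]

/-- The sorted-pairing bound: `Q + (2(√(q₀q₁)+√(q₂q₃)))² ≤ 1`. -/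
theorem final_bound_aux (q₀ q₁ q₂ q₃ : ℝ) (h0 : 0 ≤ q₀) (h1 : 0 ≤ q₁) (h2 : 0 ≤ q₂)
    (h3 : 0 ≤ q₃) (hs : q₀ + q₁ + q₂ + q₃ = 1) :
    (q₀ - q₁) ^ 2 + (q₂ - q₃) ^ 2 + (2 * (Real.sqrt (q₀*q₁) + Real.sqrt (q₂*q₃))) ^ 2 ≤ 1 := by
  have h2s01 := two_sqrt_mul_le_aux q₀ q₁ h0 h1
  have h2s23 := two_sqrt_mul_le_aux q₂ q₃ h2 h3
  have hs01 : (Real.sqrt (q₀*q₁))^2 = q₀*q₁ := Real.sq_sqrt (by positivity)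
  have hs23 : (Real.sqrt (q₂*q₃))^2 = q₂*q₃ := Real.sq_sqrt (by positivity)
  nlinarith [Real.sqrt_nonneg (q₀*q₁), Real.sqrt_nonneg (q₂*q₃),
    mul_le_mul h2s01 h2s23 (by positivity) (by linarith : (0:ℝ) ≤ q₀ + q₁)]

set_option maxHeartbeats 1000000 in
/-- For every probability vector `p = (p₀,p₁,p₂,p₃)`, the quantumness
`Q(p) := (p₀↓ − p₁↓)² + (p₂↓ − p₃↓)²` (computed from the non-increasing rearrangement
`(q₀,q₁,q₂,q₃)` of `p`) satisfies `Q(p) + (max {P₁, P₂, P₃})² ≤ 1`. -/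
theorem quantumness_plus_Pmax_sq_le_one (p₀ p₁ p₂ p₃ : ℝ)
    (h₀ : 0 ≤ p₀) (h₁ : 0 ≤ p₁) (h₂ : 0 ≤ p₂) (h₃ : 0 ≤ p₃)
    (hsum : p₀ + p₁ + p₂ + p₃ = 1)
    (q₀ q₁ q₂ q₃ : ℝ)
    (hperm : ({q₀, q₁, q₂, q₃} : Multiset ℝ) = ({p₀, p₁, p₂, p₃} : Multiset ℝ))
    (hq01 : q₁ ≤ q₀) (hq12 : q₂ ≤ q₁) (hq23 : q₃ ≤ q₂) :
    (q₀ - q₁) ^ 2 + (q₂ - q₃) ^ 2 +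
      (max (max (2 * (Real.sqrt (p₀ * p₁) + Real.sqrt (p₂ * p₃)))
                (2 * (Real.sqrt (p₀ * p₂) + Real.sqrt (p₁ * p₃))))
           (2 * (Real.sqrt (p₀ * p₃) + Real.sqrt (p₁ * p₂)))) ^ 2 ≤ 1 := by
  -- power sums / product are permutation invariant
  have hs1 : q₀ + q₁ + q₂ + q₃ = p₀ + p₁ + p₂ + p₃ := by
    have := congrArg Multiset.sum hperm
    simpa [add_assoc] using this
  have hs2 : q₀^2 + q₁^2 + q₂^2 + q₃^2 = p₀^2 + p₁^2 + p₂^2 + p₃^2 := by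
    have := congrArg (fun s : Multiset ℝ => (s.map (fun t => t^2)).sum) hperm
    simpa [add_assoc] using this
  have hs3 : q₀^3 + q₁^3 + q₂^3 + q₃^3 = p₀^3 + p₁^3 + p₂^3 + p₃^3 := by
    have := congrArg (fun s : Multiset ℝ => (s.map (fun t => t^3)).sum) hperm
    simpa [add_assoc] using this
  have hprod : q₀ * q₁ * q₂ * q₃ = p₀ * p₁ * p₂ * p₃ := by
    have := congrArg Multiset.prod hperm
    simpa [mul_assoc] using this
  -- nonnegativity of sorted entries
  have hq3 : 0 ≤ q₃ := by
    have hw : q₃ ∈ ({q₀, q₁, q₂, q₃} : Multiset ℝ) := by simp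
    rw [hperm] at hw
    simp only [Multiset.insert_eq_cons, Multiset.mem_cons, Multiset.mem_singleton] at hw
    rcases hw with h' | h' | h' | h' <;> simp [h', h₀, h₁, h₂, h₃]
  have hq2 : 0 ≤ q₂ := le_trans hq3 hq23
  have hq1 : 0 ≤ q₁ := le_trans hq2 hq12
  have hq0 : 0 ≤ q₀ := le_trans hq1 hq01
  -- elementary symmetric equalities (Newton)
  have he1 : p₀+p₁+p₂+p₃ = q₀+q₁+q₂+q₃ := hs1.symm
  have he2 : p₀*p₁+p₀*p₂+p₀*p₃+p₁*p₂+p₁*p₃+p₂*p₃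
      = q₀*q₁+q₀*q₂+q₀*q₃+q₁*q₂+q₁*q₃+q₂*q₃ := by
    linear_combination (-(p₀+p₁+p₂+p₃+q₀+q₁+q₂+q₃)/2) * hs1 + (1/2 : ℝ) * hs2
  have he3 : p₀*p₁*p₂+p₀*p₁*p₃+p₀*p₂*p₃+p₁*p₂*p₃
      = q₀*q₁*q₂+q₀*q₁*q₃+q₀*q₂*q₃+q₁*q₂*q₃ := by
    linear_combination
      (-((p₀+p₁+p₂+p₃)^2 + (p₀+p₁+p₂+p₃)*(q₀+q₁+q₂+q₃) + (q₀+q₁+q₂+q₃)^2)/6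
        + (q₀^2+q₁^2+q₂^2+q₃^2)/2) * hs1
      + ((p₀+p₁+p₂+p₃)/2) * hs2 + (-(1:ℝ)/3) * hs3
  have he4 : p₀*p₁*p₂*p₃ = q₀*q₁*q₂*q₃ := hprod.symm
  -- each pairing sum is at most q₀q₁ + q₂q₃
  have hp1 : p₀*p₁ + p₂*p₃ ≤ q₀*q₁ + q₂*q₃ :=
    pairing_le_aux p₀ p₁ p₂ p₃ q₀ q₁ q₂ q₃ he1 (by linear_combination he2)
      (by linear_combination he3) (by linear_combination he4) hq01 hq12 hq23
  have hp2 : p₀*p₂ + p₁*p₃ ≤ q₀*q₁ + q₂*q₃ :=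
    pairing_le_aux p₀ p₂ p₁ p₃ q₀ q₁ q₂ q₃ (by linear_combination he1) (by linear_combination he2)
      (by linear_combination he3) (by linear_combination he4) hq01 hq12 hq23
  have hp3 : p₀*p₃ + p₁*p₂ ≤ q₀*q₁ + q₂*q₃ :=
    pairing_le_aux p₀ p₃ p₁ p₂ q₀ q₁ q₂ q₃ (by linear_combination he1) (by linear_combination he2)
      (by linear_combination he3) (by linear_combination he4) hq01 hq12 hq23
  -- bound each Pᵢ by B := 2(√(q₀q₁) + √(q₂q₃))
  set B : ℝ := 2 * (Real.sqrt (q₀*q₁) + Real.sqrt (q₂*q₃)) with hB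
  have hP1 : 2 * (Real.sqrt (p₀ * p₁) + Real.sqrt (p₂ * p₃)) ≤ B := by
    have := sqrt_pair_le_aux (p₀*p₁) (p₂*p₃) (q₀*q₁) (q₂*q₃) (by positivity) (by positivity)
      (by positivity) (by positivity) hp1 (by linear_combination hprod.symm)
    rw [hB]; linarith
  have hP2 : 2 * (Real.sqrt (p₀ * p₂) + Real.sqrt (p₁ * p₃)) ≤ B := by
    have := sqrt_pair_le_aux (p₀*p₂) (p₁*p₃) (q₀*q₁) (q₂*q₃) (by positivity) (by positivity)
      (by positivity) (by positivity) hp2 (by linear_combination hprod.symm)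
    rw [hB]; linarith
  have hP3 : 2 * (Real.sqrt (p₀ * p₃) + Real.sqrt (p₁ * p₂)) ≤ B := by
    have := sqrt_pair_le_aux (p₀*p₃) (p₁*p₂) (q₀*q₁) (q₂*q₃) (by positivity) (by positivity)
      (by positivity) (by positivity) hp3 (by linear_combination hprod.symm)
    rw [hB]; linarith
  have hmaxle : (max (max (2 * (Real.sqrt (p₀ * p₁) + Real.sqrt (p₂ * p₃)))
                (2 * (Real.sqrt (p₀ * p₂) + Real.sqrt (p₁ * p₃))))
           (2 * (Real.sqrt (p₀ * p₃) + Real.sqrt (p₁ * p₂)))) ≤ B :=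
    max_le (max_le hP1 hP2) hP3
  have hmax0 : 0 ≤ (max (max (2 * (Real.sqrt (p₀ * p₁) + Real.sqrt (p₂ * p₃)))
                (2 * (Real.sqrt (p₀ * p₂) + Real.sqrt (p₁ * p₃))))
           (2 * (Real.sqrt (p₀ * p₃) + Real.sqrt (p₁ * p₂)))) :=
    le_trans (by positivity) (le_max_left _ _ |>.trans (le_max_left _ _) |>.trans le_rfl)
  have hmaxsq : (max (max (2 * (Real.sqrt (p₀ * p₁) + Real.sqrt (p₂ * p₃)))
                (2 * (Real.sqrt (p₀ * p₂) + Real.sqrt (p₁ * p₃))))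
           (2 * (Real.sqrt (p₀ * p₃) + Real.sqrt (p₁ * p₂)))) ^ 2 ≤ B ^ 2 :=
    pow_le_pow_left₀ hmax0 hmaxle 2
  -- final bound : Q + B² ≤ 1
  have hqsum : q₀ + q₁ + q₂ + q₃ = 1 := by rw [hs1]; exact hsum
  have hfinal : (q₀ - q₁) ^ 2 + (q₂ - q₃) ^ 2 + B ^ 2 ≤ 1 := by
    rw [hB]; exact final_bound_aux q₀ q₁ q₂ q₃ hq0 hq1 hq2 hq3 hqsum
  linarith [hmaxsq, hfinal]
end

section
/- Fix s ∈ [0,1] and let (w₁,w₂,w₃) be a probability vector over three outcomes. For the probability vector p = (p₀,p₁,p₂,p₃) with p₀ = (1 + √(1−s²))/2 and p_i = w_i(1 − √(1−s²))/2 for i ∈ {1,2,3}, one has for each i ∈ {1,2,3} (with (i,j,k) a permutation of (1,2,3)): P_i = s√(w_i) + (1 − √(1−s²))√(w_j w_k). -/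
lemma sqrt_first (s w : ℝ) (hs0 : 0 ≤ s) (hs1 : s ≤ 1) (hw : 0 ≤ w) :
    2 * Real.sqrt ((1 + Real.sqrt (1 - s ^ 2)) / 2 * (w * (1 - Real.sqrt (1 - s ^ 2)) / 2)) =
      s * Real.sqrt w := by
  set c := Real.sqrt (1 - s ^ 2) with hc
  have hs2 : (0:ℝ) ≤ 1 - s ^ 2 := by nlinarith
  have hcsq : c ^ 2 = 1 - s ^ 2 := Real.sq_sqrt hs2
  have : (1 + c) / 2 * (w * (1 - c) / 2) = s ^ 2 / 4 * w := by ring_nf; nlinarith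
  rw [this, Real.sqrt_mul (by positivity)]
  rw [show s ^ 2 / 4 = (s / 2) ^ 2 by ring, Real.sqrt_sq (by positivity)]
  ring

lemma sqrt_second (c u v : ℝ) (hc : c ≤ 1) (hu : 0 ≤ u) (hv : 0 ≤ v) :
    2 * Real.sqrt ((u * (1 - c) / 2) * (v * (1 - c) / 2)) =
      (1 - c) * Real.sqrt (u * v) := by
  have h1 : (u * (1 - c) / 2) * (v * (1 - c) / 2) = ((1 - c) / 2) ^ 2 * (u * v) := by ring
  rw [h1, Real.sqrt_mul (by positivity), Real.sqrt_sq (by linarith)]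
  ring

/-- Fix `s ∈ [0,1]` and a probability vector `(w₁,w₂,w₃)`. For the
probability vector `p` with `p₀ = (1 + √(1−s²))/2` and `pᵢ = wᵢ(1 − √(1−s²))/2`
for `i ∈ {1,2,3}`, one has `Pᵢ = s√(wᵢ) + (1 − √(1−s²))√(wⱼwₖ)` for each `i`. -/
theorem Pi_on_polytope_face (s w₁ w₂ w₃ : ℝ)
    (hs0 : 0 ≤ s) (hs1 : s ≤ 1)
    (hw₁ : 0 ≤ w₁) (hw₂ : 0 ≤ w₂) (hw₃ : 0 ≤ w₃)
    (hwsum : w₁ + w₂ + w₃ = 1)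
    (p₀ p₁ p₂ p₃ : ℝ)
    (hp₀ : p₀ = (1 + Real.sqrt (1 - s ^ 2)) / 2)
    (hp₁ : p₁ = w₁ * (1 - Real.sqrt (1 - s ^ 2)) / 2)
    (hp₂ : p₂ = w₂ * (1 - Real.sqrt (1 - s ^ 2)) / 2)
    (hp₃ : p₃ = w₃ * (1 - Real.sqrt (1 - s ^ 2)) / 2) :
    2 * (Real.sqrt (p₀ * p₁) + Real.sqrt (p₂ * p₃)) =
      s * Real.sqrt w₁ + (1 - Real.sqrt (1 - s ^ 2)) * Real.sqrt (w₂ * w₃) ∧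
    2 * (Real.sqrt (p₀ * p₂) + Real.sqrt (p₁ * p₃)) =
      s * Real.sqrt w₂ + (1 - Real.sqrt (1 - s ^ 2)) * Real.sqrt (w₁ * w₃) ∧
    2 * (Real.sqrt (p₀ * p₃) + Real.sqrt (p₁ * p₂)) =
      s * Real.sqrt w₃ + (1 - Real.sqrt (1 - s ^ 2)) * Real.sqrt (w₁ * w₂) := by
  have hs2 : (0:ℝ) ≤ 1 - s ^ 2 := by nlinarith
  have hc1 : Real.sqrt (1 - s ^ 2) ≤ 1 := by
    exact Real.sqrt_le_one.mpr (by nlinarith)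
  subst hp₀ hp₁ hp₂ hp₃
  refine ⟨?_, ?_, ?_⟩
  · rw [mul_add, sqrt_first s w₁ hs0 hs1 hw₁, sqrt_second _ w₂ w₃ hc1 hw₂ hw₃]
  · rw [mul_add, sqrt_first s w₂ hs0 hs1 hw₂,
      show w₁ * (1 - Real.sqrt (1 - s ^ 2)) / 2 * (w₃ * (1 - Real.sqrt (1 - s ^ 2)) / 2)
        = w₁ * (1 - Real.sqrt (1 - s ^ 2)) / 2 * (w₃ * (1 - Real.sqrt (1 - s ^ 2)) / 2) from rfl,
      sqrt_second _ w₁ w₃ hc1 hw₁ hw₃]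
  · rw [mul_add, sqrt_first s w₃ hs0 hs1 hw₃, sqrt_second _ w₁ w₂ hc1 hw₁ hw₂]
end

section
/- Fix s ∈ [0,1] and t ∈ [0,1], and consider the probability vector p = (t, 1−t, 0, 0). The compatibility condition of the unbiased binary qubit measurement with sharpness s and direction n = (1,0,0) with the Pauli channel of p holds if and only if s ≤ 2√(t(1−t)), which is equivalent to (1 − √(1−s²))/2 ≤ t ≤ (1 + √(1−s²))/2. -/
/-- Fix `s, t ∈ [0,1]` and take the probability vector `p = (t, 1−t, 0, 0)`.
The compatibility condition of the measurement with sharpness `s` and direction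
`n = (1,0,0)` with the Pauli channel of `p` holds iff `s ≤ 2√(t(1−t))`, which in turn is
equivalent to `(1 − √(1−s²))/2 ≤ t ≤ (1 + √(1−s²))/2`. -/
theorem edge_compatibility_iff (s t : ℝ)
    (hs0 : 0 ≤ s) (hs1 : s ≤ 1) (ht0 : 0 ≤ t) (ht1 : t ≤ 1)
    (P₁ P₂ P₃ : ℝ)
    (hP₁ : P₁ = 2 * (Real.sqrt (t * (1 - t)) + Real.sqrt (0 * 0)))
    (hP₂ : P₂ = 2 * (Real.sqrt (t * 0) + Real.sqrt ((1 - t) * 0)))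
    (hP₃ : P₃ = 2 * (Real.sqrt (t * 0) + Real.sqrt ((1 - t) * 0))) :
    (((P₁ = 0 → s * 1 = 0) ∧ (P₂ = 0 → s * 0 = 0) ∧ (P₃ = 0 → s * 0 = 0) ∧
      (if P₁ = 0 then 0 else s ^ 2 * 1 ^ 2 / P₁ ^ 2) +
      (if P₂ = 0 then 0 else s ^ 2 * 0 ^ 2 / P₂ ^ 2) +
      (if P₃ = 0 then 0 else s ^ 2 * 0 ^ 2 / P₃ ^ 2) ≤ 1) ↔
      s ≤ 2 * Real.sqrt (t * (1 - t))) ∧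
    (s ≤ 2 * Real.sqrt (t * (1 - t)) ↔
      (1 - Real.sqrt (1 - s ^ 2)) / 2 ≤ t ∧ t ≤ (1 + Real.sqrt (1 - s ^ 2)) / 2) := by
  set r := Real.sqrt (t * (1 - t)) with hr_def
  have hr0 : 0 ≤ r := Real.sqrt_nonneg _
  have hr2 : r ^ 2 = t * (1 - t) := Real.sq_sqrt (by nlinarith)
  have hP₂0 : P₂ = 0 := by simp [hP₂]
  have hP₃0 : P₃ = 0 := by simp [hP₃]
  have hP₁r : P₁ = 2 * r := by simp [hP₁]
  have hq0 : 0 ≤ 1 - s ^ 2 := by nlinarith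
  set q := Real.sqrt (1 - s ^ 2) with hq_def
  have hq_nonneg : 0 ≤ q := Real.sqrt_nonneg _
  have hq2 : q ^ 2 = 1 - s ^ 2 := Real.sq_sqrt hq0
  constructor
  · rcases eq_or_lt_of_le hr0 with hr | hr
    · -- r = 0
      have hP10 : P₁ = 0 := by rw [hP₁r, ← hr]; ring
      simp only [hP10, hP₂0, hP₃0, if_pos rfl, eq_self_iff_true, if_true, ← hr]
      constructor
      · rintro ⟨h1, -⟩
        have := h1 trivial
        nlinarith [this]
      · intro h
        have hs : s = 0 := le_antisymm (by linarith) hs0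
        refine ⟨fun _ => by simp [hs], fun _ => by ring, fun _ => by ring, by norm_num⟩
    · have hP1ne : P₁ ≠ 0 := by rw [hP₁r]; positivity
      simp only [hP₂0, hP₃0, if_pos rfl, eq_self_iff_true, if_true, if_neg hP1ne]
      rw [hP₁r]
      constructor
      · rintro ⟨-, -, -, h⟩
        have hP1pos : (0:ℝ) < (2 * r) ^ 2 := by positivity
        rw [add_zero, add_zero, div_le_one hP1pos] at h
        nlinarith
      · intro h
        refine ⟨fun h0 => absurd h0 (by rw [← hP₁r]; exact hP1ne), fun _ => by ring,
          fun _ => by ring, ?_⟩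
        have hP1pos : (0:ℝ) < (2 * r) ^ 2 := by positivity
        rw [add_zero, add_zero, div_le_one hP1pos]
        nlinarith
  · constructor
    · intro h
      constructor <;> nlinarith
    · rintro ⟨h1, h2⟩
      nlinarith
end

section
/- Let p = (p₀,p₁,p₂,p₃) be a probability vector and s ∈ [0,1]. If s ≤ max{P₁, P₂, P₃}, then max{p₀, p₁, p₂, p₃} ≤ (1 + √(1−s²))/2. -/
lemma key_pmax (a b c d s : ℝ) (ha : 0 ≤ a) (hb : 0 ≤ b) (hc : 0 ≤ c) (hd : 0 ≤ d)
    (hsum : a + b + c + d = 1) (hs0 : 0 ≤ s)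
    (hs : s ≤ 2 * (Real.sqrt (a * b) + Real.sqrt (c * d))) :
    a ≤ (1 + Real.sqrt (1 - s ^ 2)) / 2 := by
  have hab : Real.sqrt (a * b) ^ 2 = a * b := Real.sq_sqrt (mul_nonneg ha hb)
  have hcd : Real.sqrt (c * d) ^ 2 = c * d := Real.sq_sqrt (mul_nonneg hc hd)
  have had : Real.sqrt (a * d) ^ 2 = a * d := Real.sq_sqrt (mul_nonneg ha hd)
  have hbc : Real.sqrt (b * c) ^ 2 = b * c := Real.sq_sqrt (mul_nonneg hb hc)
  have hX : Real.sqrt (a * b) * Real.sqrt (c * d) =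
      Real.sqrt (a * d) * Real.sqrt (b * c) := by
    rw [← Real.sqrt_mul (mul_nonneg ha hb), ← Real.sqrt_mul (mul_nonneg ha hd)]
    ring_nf
  have hsq : s ^ 2 ≤ 4 * (a + c) * (b + d) := by
    nlinarith [sq_nonneg (Real.sqrt (a * d) - Real.sqrt (b * c)),
      Real.sqrt_nonneg (a * b), Real.sqrt_nonneg (c * d),
      sq_nonneg (Real.sqrt (a * b) + Real.sqrt (c * d))]
  have hx : a + c ≤ (1 + Real.sqrt (1 - s ^ 2)) / 2 := by
    rcases le_or_gt (2 * (a + c) - 1) 0 with h | h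
    · have := Real.sqrt_nonneg (1 - s ^ 2)
      linarith
    · have h2 : 2 * (a + c) - 1 ≤ Real.sqrt (1 - s ^ 2) :=
        (Real.le_sqrt' h).mpr (by nlinarith)
      linarith
  linarith

/-- For a probability vector `p` and `s ∈ [0,1]`, if
`s ≤ max {P₁, P₂, P₃}` then `max {p₀, p₁, p₂, p₃} ≤ (1 + √(1−s²))/2`. -/
theorem pmax_le_of_sharpness (p₀ p₁ p₂ p₃ s : ℝ)
    (h₀ : 0 ≤ p₀) (h₁ : 0 ≤ p₁) (h₂ : 0 ≤ p₂) (h₃ : 0 ≤ p₃)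
    (hsum : p₀ + p₁ + p₂ + p₃ = 1)
    (hs0 : 0 ≤ s) (hs1 : s ≤ 1)
    (hle : s ≤ max (max (2 * (Real.sqrt (p₀ * p₁) + Real.sqrt (p₂ * p₃)))
                        (2 * (Real.sqrt (p₀ * p₂) + Real.sqrt (p₁ * p₃))))
                   (2 * (Real.sqrt (p₀ * p₃) + Real.sqrt (p₁ * p₂)))) :
    max (max (max p₀ p₁) p₂) p₃ ≤ (1 + Real.sqrt (1 - s ^ 2)) / 2 := by
  rcases le_max_iff.mp hle with h | h3
  · rcases le_max_iff.mp h with h1 | h2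
    · -- P₁ : pairs (0,1) and (2,3)
      have e0 := key_pmax p₀ p₁ p₂ p₃ s h₀ h₁ h₂ h₃ (by linarith) hs0 h1
      have e1 := key_pmax p₁ p₀ p₃ p₂ s h₁ h₀ h₃ h₂ (by linarith) hs0
        (by rw [mul_comm p₁ p₀, mul_comm p₃ p₂]; linarith)
      have e2 := key_pmax p₂ p₃ p₀ p₁ s h₂ h₃ h₀ h₁ (by linarith) hs0
        (by linarith)
      have e3 := key_pmax p₃ p₂ p₁ p₀ s h₃ h₂ h₁ h₀ (by linarith) hs0
        (by rw [mul_comm p₃ p₂, mul_comm p₁ p₀]; linarith)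
      simp only [max_le_iff]; exact ⟨⟨⟨e0, e1⟩, e2⟩, e3⟩
    · -- P₂ : pairs (0,2) and (1,3)
      have e0 := key_pmax p₀ p₂ p₁ p₃ s h₀ h₂ h₁ h₃ (by linarith) hs0 h2
      have e1 := key_pmax p₁ p₃ p₀ p₂ s h₁ h₃ h₀ h₂ (by linarith) hs0
        (by linarith)
      have e2 := key_pmax p₂ p₀ p₃ p₁ s h₂ h₀ h₃ h₁ (by linarith) hs0
        (by rw [mul_comm p₂ p₀, mul_comm p₃ p₁]; linarith)
      have e3 := key_pmax p₃ p₁ p₂ p₀ s h₃ h₁ h₂ h₀ (by linarith) hs0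
        (by rw [mul_comm p₃ p₁, mul_comm p₂ p₀]; linarith)
      simp only [max_le_iff]; exact ⟨⟨⟨e0, e1⟩, e2⟩, e3⟩
  · -- P₃ : pairs (0,3) and (1,2)
    have e0 := key_pmax p₀ p₃ p₁ p₂ s h₀ h₃ h₁ h₂ (by linarith) hs0 h3
    have e1 := key_pmax p₁ p₂ p₀ p₃ s h₁ h₂ h₀ h₃ (by linarith) hs0
      (by linarith)
    have e2 := key_pmax p₂ p₁ p₃ p₀ s h₂ h₁ h₃ h₀ (by linarith) hs0
      (by rw [mul_comm p₂ p₁, mul_comm p₃ p₀]; linarith)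
    have e3 := key_pmax p₃ p₀ p₂ p₁ s h₃ h₀ h₂ h₁ (by linarith) hs0
      (by rw [mul_comm p₃ p₀, mul_comm p₂ p₁]; linarith)
    simp only [max_le_iff]; exact ⟨⟨⟨e0, e1⟩, e2⟩, e3⟩
end

section
/- Fix s ∈ [0,1]. The maximum of max{p₀, p₁, p₂, p₃} over all probability vectors p = (p₀,p₁,p₂,p₃) satisfying P₁ ≥ s equals (1 + √(1−s²))/2; it is attained by the vector q₁ = ((1 + √(1−s²))/2, (1 − √(1−s²))/2, 0, 0), which satisfies P₁(q₁) = s. (Equivalently, the best corrected input-output fidelity over Pauli channels compatible with a measurement of sharpness s along the x-axis is (2 + √(1−s²))/3.) -/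
/-- Fix `s ∈ [0,1]`. The maximum of `max {p₀,p₁,p₂,p₃}` over all
probability vectors `p` with `P₁ ≥ s` equals `(1 + √(1−s²))/2`; it is attained by
`q₁ = ((1 + √(1−s²))/2, (1 − √(1−s²))/2, 0, 0)`, which satisfies `P₁(q₁) = s`.
(Equivalently: the best corrected input–output fidelity `(1 + 2 maxⱼ pⱼ)/3` over Pauli
channels compatible with a sharpness-`s` measurement along the x-axis is `(2+√(1−s²))/3`.) -/
theorem best_fidelity_sharpness_tradeoff (s : ℝ) (hs0 : 0 ≤ s) (hs1 : s ≤ 1) :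
    (∀ p₀ p₁ p₂ p₃ : ℝ, 0 ≤ p₀ → 0 ≤ p₁ → 0 ≤ p₂ → 0 ≤ p₃ →
        p₀ + p₁ + p₂ + p₃ = 1 →
        s ≤ 2 * (Real.sqrt (p₀ * p₁) + Real.sqrt (p₂ * p₃)) →
        max (max (max p₀ p₁) p₂) p₃ ≤ (1 + Real.sqrt (1 - s ^ 2)) / 2) ∧
    (∀ q₀ q₁ : ℝ, q₀ = (1 + Real.sqrt (1 - s ^ 2)) / 2 →
        q₁ = (1 - Real.sqrt (1 - s ^ 2)) / 2 →
        (0 ≤ q₀ ∧ 0 ≤ q₁ ∧ q₀ + q₁ + 0 + 0 = 1) ∧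
        2 * (Real.sqrt (q₀ * q₁) + Real.sqrt (0 * 0)) = s ∧
        max (max (max q₀ q₁) 0) 0 = (1 + Real.sqrt (1 - s ^ 2)) / 2) := by
  have h1s : (0:ℝ) ≤ 1 - s ^ 2 := by nlinarith
  set t := Real.sqrt (1 - s ^ 2) with ht
  have ht0 : 0 ≤ t := Real.sqrt_nonneg _
  have ht2 : t ^ 2 = 1 - s ^ 2 := Real.sq_sqrt h1s
  have ht1 : t ≤ 1 := by nlinarith
  constructor
  · intro p₀ p₁ p₂ p₃ h0 h1 h2 h3 hsum hP
    set a := Real.sqrt (p₀ * p₁) with ha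
    set b := Real.sqrt (p₂ * p₃) with hb
    have ha0 : 0 ≤ a := Real.sqrt_nonneg _
    have hb0 : 0 ≤ b := Real.sqrt_nonneg _
    have ha2 : a ^ 2 = p₀ * p₁ := Real.sq_sqrt (mul_nonneg h0 h1)
    have hb2 : b ^ 2 = p₂ * p₃ := Real.sq_sqrt (mul_nonneg h2 h3)
    -- 2ab ≤ p₀p₃ + p₁p₂
    have hab : 2 * (a * b) ≤ p₀ * p₃ + p₁ * p₂ := by
      have hcd : Real.sqrt (p₀ * p₃) * Real.sqrt (p₁ * p₂) = a * b := by
        rw [ha, hb, ← Real.sqrt_mul (mul_nonneg h0 h3), ← Real.sqrt_mul (mul_nonneg h0 h1)]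
        ring_nf
      have hc2 : Real.sqrt (p₀ * p₃) ^ 2 = p₀ * p₃ := Real.sq_sqrt (mul_nonneg h0 h3)
      have hd2 : Real.sqrt (p₁ * p₂) ^ 2 = p₁ * p₂ := Real.sq_sqrt (mul_nonneg h1 h2)
      nlinarith [sq_nonneg (Real.sqrt (p₀ * p₃) - Real.sqrt (p₁ * p₂))]
    -- s² ≤ 4 X (1 - X), X = p₀ + p₂
    have hsq : s ^ 2 ≤ (2 * (a + b)) ^ 2 := by nlinarith
    have hs2 : s ^ 2 ≤ 4 * (p₀ + p₂) * (p₁ + p₃) := by nlinarith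
    have hX : p₁ + p₃ = 1 - (p₀ + p₂) := by linarith
    -- t ≥ 2X - 1 and t ≥ 1 - 2X
    have habs : ∀ x : ℝ, x ^ 2 ≤ t ^ 2 → x ≤ t := fun x hx =>
      (le_abs_self x).trans (by
        rw [← Real.sqrt_sq_eq_abs, ← Real.sqrt_sq ht0]; exact Real.sqrt_le_sqrt hx)
    have hsq2 : (2 * (p₀ + p₂) - 1) ^ 2 ≤ t ^ 2 := by nlinarith [hs2, ht2, hX]
    have key1 : 2 * (p₀ + p₂) - 1 ≤ t := habs _ hsq2
    have key2 : 1 - 2 * (p₀ + p₂) ≤ t := habs _ (by nlinarith [hsq2])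
    have g0 : p₀ ≤ (1 + t) / 2 := by linarith
    have g2 : p₂ ≤ (1 + t) / 2 := by linarith
    have g1 : p₁ ≤ (1 + t) / 2 := by linarith
    have g3 : p₃ ≤ (1 + t) / 2 := by linarith
    exact max_le (max_le (max_le g0 g1) g2) g3
  · intro q₀ q₁ hq0 hq1
    have hq0' : 0 ≤ q₀ := by rw [hq0]; linarith
    have hq1' : 0 ≤ q₁ := by rw [hq1]; linarith
    refine ⟨⟨hq0', hq1', by rw [hq0, hq1]; ring⟩, ?_, ?_⟩
    · have : q₀ * q₁ = (s / 2) ^ 2 := by rw [hq0, hq1]; nlinarith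
      rw [this, Real.sqrt_sq (by linarith : (0:ℝ) ≤ s / 2)]
      norm_num
      ring
    · have : q₁ ≤ q₀ := by rw [hq0, hq1]; linarith
      rw [max_eq_left this, max_eq_left hq0', max_eq_left hq0', hq0]
end

section
/- Let p = (p₀,p₁,p₂,p₃) be a probability vector whose largest component p_m := max{p₀,p₁,p₂,p₃} satisfies p_m ≥ 1/2. Then max{P₁, P₂, P₃} ≤ 2√(p_m(1 − p_m)); equivalently, (2p_m − 1)² + (max{P₁, P₂, P₃})² ≤ 1. (In terms of the corrected fidelity F = (1 + 2p_m)/3 and the best sharpness S = max{P₁,P₂,P₃}, this reads (3F − 2)² + S² ≤ 1.) -/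
/-- Key lemma: if `x+y+z+w = 1` with all nonnegative, and `1/2 ≤ pm ≤ x+z`, then
`√(xy)+√(zw) ≤ √(pm(1-pm))`. -/
lemma key_sqrt_bound (x y z w pm : ℝ) (hx : 0 ≤ x) (hy : 0 ≤ y) (hz : 0 ≤ z) (hw : 0 ≤ w)
    (hsum : x + y + z + w = 1) (hhalf : 1 / 2 ≤ pm) (hle : pm ≤ x + z) :
    Real.sqrt (x * y) + Real.sqrt (z * w) ≤ Real.sqrt (pm * (1 - pm)) := by
  have hA := Real.sq_sqrt (mul_nonneg hx hy)
  have hB := Real.sq_sqrt (mul_nonneg hz hw)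
  have hAnn := Real.sqrt_nonneg (x * y)
  have hBnn := Real.sqrt_nonneg (z * w)
  have hABmul : Real.sqrt (x * y) * Real.sqrt (z * w) = Real.sqrt (x * y * (z * w)) :=
    (Real.sqrt_mul (mul_nonneg hx hy) _).symm
  have hC : Real.sqrt (x * y * (z * w)) ≤ (x * w + z * y) / 2 := by
    rw [show x * y * (z * w) = (x * w) * (z * y) by ring]
    calc Real.sqrt ((x * w) * (z * y)) ≤ Real.sqrt (((x * w + z * y) / 2) ^ 2) :=
          Real.sqrt_le_sqrt (by nlinarith [sq_nonneg (x * w - z * y)])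
      _ = (x * w + z * y) / 2 := Real.sqrt_sq (by positivity)
  have hsq : (Real.sqrt (x * y) + Real.sqrt (z * w)) ^ 2 ≤ (x + z) * (y + w) := by
    have : (Real.sqrt (x * y) + Real.sqrt (z * w)) ^ 2
        = x * y + z * w + 2 * Real.sqrt (x * y * (z * w)) := by
      rw [add_sq, hA, hB, mul_assoc, hABmul]; ring
    nlinarith [hC]
  have h1 : Real.sqrt (x * y) + Real.sqrt (z * w) ≤ Real.sqrt ((x + z) * (y + w)) := by
    calc Real.sqrt (x * y) + Real.sqrt (z * w)
        = Real.sqrt ((Real.sqrt (x * y) + Real.sqrt (z * w)) ^ 2) :=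
          (Real.sqrt_sq (by positivity)).symm
      _ ≤ Real.sqrt ((x + z) * (y + w)) := Real.sqrt_le_sqrt hsq
  have h2 : (x + z) * (y + w) ≤ pm * (1 - pm) := by nlinarith
  exact h1.trans (Real.sqrt_le_sqrt h2)

/-- Theorem 3: For a probability vector `p` whose largest component
`p_m = max {p₀,p₁,p₂,p₃}` satisfies `p_m ≥ 1/2`, one has
`max {P₁,P₂,P₃} ≤ 2√(p_m(1 − p_m))`, equivalently
`(2p_m − 1)² + (max {P₁,P₂,P₃})² ≤ 1` (i.e. `(3F − 2)² + S² ≤ 1` for the corrected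
fidelity `F = (1 + 2p_m)/3` and the best sharpness `S = max {P₁,P₂,P₃}`). -/
theorem fidelity_sharpness_tradeoff (p₀ p₁ p₂ p₃ : ℝ)
    (h₀ : 0 ≤ p₀) (h₁ : 0 ≤ p₁) (h₂ : 0 ≤ p₂) (h₃ : 0 ≤ p₃)
    (hsum : p₀ + p₁ + p₂ + p₃ = 1)
    (pm : ℝ) (hpm : pm = max (max (max p₀ p₁) p₂) p₃) (hhalf : 1 / 2 ≤ pm)
    (S : ℝ)
    (hS : S = max (max (2 * (Real.sqrt (p₀ * p₁) + Real.sqrt (p₂ * p₃)))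
                       (2 * (Real.sqrt (p₀ * p₂) + Real.sqrt (p₁ * p₃))))
                  (2 * (Real.sqrt (p₀ * p₃) + Real.sqrt (p₁ * p₂)))) :
    S ≤ 2 * Real.sqrt (pm * (1 - pm)) ∧
    (2 * pm - 1) ^ 2 + S ^ 2 ≤ 1 ∧
    (3 * ((1 + 2 * pm) / 3) - 2) ^ 2 + S ^ 2 ≤ 1 := by
  -- pm is one of the four components
  have hcases : pm = p₀ ∨ pm = p₁ ∨ pm = p₂ ∨ pm = p₃ := by
    rw [hpm]
    rcases max_cases (max (max p₀ p₁) p₂) p₃ with ⟨h, _⟩ | ⟨h, _⟩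
    · rw [h]
      rcases max_cases (max p₀ p₁) p₂ with ⟨h', _⟩ | ⟨h', _⟩
      · rw [h']
        rcases max_cases p₀ p₁ with ⟨h'', _⟩ | ⟨h'', _⟩ <;> simp [h'']
      · simp [h']
    · simp [h]
  have hpm1 : pm ≤ 1 := by
    rcases hcases with h | h | h | h <;> rw [h] <;> linarith
  -- Bound each of the three P's
  have hP1 : Real.sqrt (p₀ * p₁) + Real.sqrt (p₂ * p₃) ≤ Real.sqrt (pm * (1 - pm)) := by
    rcases hcases with h | h | h | h
    · exact key_sqrt_bound p₀ p₁ p₂ p₃ pm h₀ h₁ h₂ h₃ hsum hhalf (by linarith)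
    · rw [mul_comm p₀ p₁, mul_comm p₂ p₃]
      exact key_sqrt_bound p₁ p₀ p₃ p₂ pm h₁ h₀ h₃ h₂ (by linarith) hhalf (by linarith)
    · exact key_sqrt_bound p₀ p₁ p₂ p₃ pm h₀ h₁ h₂ h₃ hsum hhalf (by linarith)
    · rw [mul_comm p₀ p₁, mul_comm p₂ p₃]
      exact key_sqrt_bound p₁ p₀ p₃ p₂ pm h₁ h₀ h₃ h₂ (by linarith) hhalf (by linarith)
  have hP2 : Real.sqrt (p₀ * p₂) + Real.sqrt (p₁ * p₃) ≤ Real.sqrt (pm * (1 - pm)) := by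
    rcases hcases with h | h | h | h
    · exact key_sqrt_bound p₀ p₂ p₁ p₃ pm h₀ h₂ h₁ h₃ (by linarith) hhalf (by linarith)
    · exact key_sqrt_bound p₀ p₂ p₁ p₃ pm h₀ h₂ h₁ h₃ (by linarith) hhalf (by linarith)
    · rw [mul_comm p₀ p₂, mul_comm p₁ p₃]
      exact key_sqrt_bound p₂ p₀ p₃ p₁ pm h₂ h₀ h₃ h₁ (by linarith) hhalf (by linarith)
    · rw [mul_comm p₀ p₂, mul_comm p₁ p₃]
      exact key_sqrt_bound p₂ p₀ p₃ p₁ pm h₂ h₀ h₃ h₁ (by linarith) hhalf (by linarith)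
  have hP3 : Real.sqrt (p₀ * p₃) + Real.sqrt (p₁ * p₂) ≤ Real.sqrt (pm * (1 - pm)) := by
    rcases hcases with h | h | h | h
    · exact key_sqrt_bound p₀ p₃ p₁ p₂ pm h₀ h₃ h₁ h₂ (by linarith) hhalf (by linarith)
    · exact key_sqrt_bound p₀ p₃ p₁ p₂ pm h₀ h₃ h₁ h₂ (by linarith) hhalf (by linarith)
    · rw [mul_comm p₀ p₃, mul_comm p₁ p₂]
      exact key_sqrt_bound p₃ p₀ p₂ p₁ pm h₃ h₀ h₂ h₁ (by linarith) hhalf (by linarith)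
    · rw [mul_comm p₀ p₃, mul_comm p₁ p₂]
      exact key_sqrt_bound p₃ p₀ p₂ p₁ pm h₃ h₀ h₂ h₁ (by linarith) hhalf (by linarith)
  have hmain : S ≤ 2 * Real.sqrt (pm * (1 - pm)) := by
    rw [hS]
    exact max_le (max_le (by linarith) (by linarith)) (by linarith)
  refine ⟨hmain, ?_, ?_⟩
  · have hSnn : 0 ≤ S := by
      rw [hS]
      have := Real.sqrt_nonneg (p₀ * p₃)
      have := Real.sqrt_nonneg (p₁ * p₂)
      exact le_max_of_le_right (by linarith)
    have hsq : S ^ 2 ≤ 4 * (pm * (1 - pm)) := by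
      have h2 : S ^ 2 ≤ (2 * Real.sqrt (pm * (1 - pm))) ^ 2 := by
        apply pow_le_pow_left₀ hSnn hmain
      have h3 := Real.sq_sqrt (by nlinarith : (0:ℝ) ≤ pm * (1 - pm))
      nlinarith
    nlinarith
  · have hSnn : 0 ≤ S := by
      rw [hS]
      have := Real.sqrt_nonneg (p₀ * p₃)
      have := Real.sqrt_nonneg (p₁ * p₂)
      exact le_max_of_le_right (by linarith)
    have hsq : S ^ 2 ≤ 4 * (pm * (1 - pm)) := by
      have h2 : S ^ 2 ≤ (2 * Real.sqrt (pm * (1 - pm))) ^ 2 := by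
        apply pow_le_pow_left₀ hSnn hmain
      have h3 := Real.sq_sqrt (by nlinarith : (0:ℝ) ≤ pm * (1 - pm))
      nlinarith
    nlinarith
end

section
/- Fix s ∈ [0,1]. The maximum of the quantumness Q(p) = (p₀↓ − p₁↓)² + (p₂↓ − p₃↓)² over all probability vectors p = (p₀,p₁,p₂,p₃) satisfying P₁ ≥ s equals 1 − s²; it is attained by the vector q₁ = ((1 + √(1−s²))/2, (1 − √(1−s²))/2, 0, 0). -/
/-! Write `xᵢ = √qᵢ`; since `{√pᵢ} = {xᵢ}` as multisets, the constraint says that `s/2` is at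
most the value of `u v + w z` on some splitting of `{xᵢ}` into two pairs `{u, v}, {w, z}`.
That value is `((u + v)² + (w + z)² - Σ xᵢ²) / 2`, and with `u + v + w + z` fixed it grows with
the larger pair sum, which is at most `x₀ + x₁`. So `s ≤ 2 (x₀ x₁ + x₂ x₃)`, and
`(Σ xᵢ²)² - (x₀² - x₁²)² - (x₂² - x₃²)² - 4 (x₀ x₁ + x₂ x₃)² = 2 ((x₀ x₂ - x₁ x₃)² + (x₀ x₃ - x₁ x₂)²)`
turns this into `Q ≤ 1 - s²`. For `q₁` both steps are equalities. -/

section SortedFour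

variable {x₀ x₁ x₂ x₃ : ℝ}

lemma le_first_of_mem_sorted (h₁ : x₁ ≤ x₀) (h₂ : x₂ ≤ x₁) (h₃ : x₃ ≤ x₂) {a : ℝ}
    (ha : a ∈ ({x₀, x₁, x₂, x₃} : Multiset ℝ)) : a ≤ x₀ := by
  simp only [Multiset.insert_eq_cons, Multiset.mem_cons, Multiset.mem_singleton] at ha
  rcases ha with rfl | rfl | rfl | rfl <;> linarith

lemma countP_gt_second_le_one (h₂ : x₂ ≤ x₁) (h₃ : x₃ ≤ x₂) :
    ({x₀, x₁, x₂, x₃} : Multiset ℝ).countP (x₁ < ·) ≤ 1 := by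
  simp only [Multiset.insert_eq_cons, ← Multiset.cons_zero, Multiset.countP_cons,
    Multiset.countP_zero, lt_irrefl, not_lt.2 h₂, not_lt.2 (h₃.trans h₂), if_false]
  split_ifs <;> simp

lemma add_le_top_two_of_le (h₁ : x₁ ≤ x₀) (h₂ : x₂ ≤ x₁) (h₃ : x₃ ≤ x₂) {a b : ℝ}
    (hab : ({a, b} : Multiset ℝ) ≤ {x₀, x₁, x₂, x₃}) : a + b ≤ x₀ + x₁ := by
  have ha := le_first_of_mem_sorted h₁ h₂ h₃ (Multiset.mem_of_le hab (a := a) (by simp))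
  have hb := le_first_of_mem_sorted h₁ h₂ h₃ (Multiset.mem_of_le hab (a := b) (by simp))
  have hcount := (Multiset.countP_le_of_le (x₁ < ·) hab).trans (countP_gt_second_le_one h₂ h₃)
  have hab₁ : a ≤ x₁ ∨ b ≤ x₁ := by
    by_contra! hgt
    simp only [Multiset.insert_eq_cons, ← Multiset.cons_zero, Multiset.countP_cons,
      Multiset.countP_zero, hgt.1, hgt.2, if_true] at hcount
    omega
  rcases hab₁ with ha₁ | hb₁ <;> linarith

lemma mul_add_mul_le_of_sorted (h₁ : x₁ ≤ x₀) (h₂ : x₂ ≤ x₁) (h₃ : x₃ ≤ x₂) {y₀ y₁ y₂ y₃ : ℝ}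
    (h : ({x₀, x₁, x₂, x₃} : Multiset ℝ) = {y₀, y₁, y₂, y₃}) :
    y₀ * y₁ + y₂ * y₃ ≤ x₀ * x₁ + x₂ * x₃ := by
  have hsum : x₀ + x₁ + x₂ + x₃ = y₀ + y₁ + y₂ + y₃ := by
    simpa [add_assoc] using congrArg Multiset.sum h
  have hsq : x₀ ^ 2 + x₁ ^ 2 + x₂ ^ 2 + x₃ ^ 2 = y₀ ^ 2 + y₁ ^ 2 + y₂ ^ 2 + y₃ ^ 2 := by
    have := congrArg (fun m ↦ (m.map (· ^ 2)).sum) h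
    simp only [Multiset.insert_eq_cons, Multiset.map_cons, Multiset.map_singleton,
      Multiset.sum_cons, Multiset.sum_singleton] at this
    linarith
  have h₀₁ : y₀ + y₁ ≤ x₀ + x₁ := add_le_top_two_of_le h₁ h₂ h₃ (h ▸
    Multiset.cons_le_cons _ (Multiset.cons_le_cons _ (Multiset.zero_le _)))
  have h₂₃ : y₂ + y₃ ≤ x₀ + x₁ := add_le_top_two_of_le h₁ h₂ h₃ (h ▸
    (Multiset.le_cons_self _ _).trans (Multiset.le_cons_self _ _))
  linear_combination (1/2) * hsq + (1/2) * (x₀ + x₁ - x₂ - x₃ - y₀ - y₁ - y₂ - y₃) * hsum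
    + mul_nonneg (sub_nonneg.2 h₀₁) (sub_nonneg.2 h₂₃)

lemma sq_two_mul_mul_add_mul_le (a b c d : ℝ) :
    (2 * (a * b + c * d)) ^ 2 ≤
      (a ^ 2 + b ^ 2 + c ^ 2 + d ^ 2) ^ 2 - ((a ^ 2 - b ^ 2) ^ 2 + (c ^ 2 - d ^ 2) ^ 2) := by
  nlinarith [sq_nonneg (a * c - b * d), sq_nonneg (a * d - b * c)]

end SortedFour

lemma sqrt_one_add_mul_one_sub_sqrt_one_sub_sq {s : ℝ} (hs0 : 0 ≤ s) (hs1 : s ≤ 1) :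
    √((1 + √(1 - s ^ 2)) / 2 * ((1 - √(1 - s ^ 2)) / 2)) = s / 2 := by
  have hr : √(1 - s ^ 2) ^ 2 = 1 - s ^ 2 := Real.sq_sqrt (by nlinarith)
  rw [show (1 + √(1 - s ^ 2)) / 2 * ((1 - √(1 - s ^ 2)) / 2) = (s / 2) ^ 2 by
    linear_combination (-1 / 4) * hr]
  exact Real.sqrt_sq (by positivity)

/-- Fix `s ∈ [0,1]`. The maximum of the quantumness
`Q(p) = (p₀↓ − p₁↓)² + (p₂↓ − p₃↓)²` over all probability vectors `p` with `P₁ ≥ s`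
equals `1 − s²`; it is attained by `q = ((1 + √(1−s²))/2, (1 − √(1−s²))/2, 0, 0)`. -/
theorem best_quantumness_sharpness_tradeoff (s : ℝ) (hs0 : 0 ≤ s) (hs1 : s ≤ 1) :
    (∀ p₀ p₁ p₂ p₃ q₀ q₁ q₂ q₃ : ℝ, 0 ≤ p₀ → 0 ≤ p₁ → 0 ≤ p₂ → 0 ≤ p₃ →
        p₀ + p₁ + p₂ + p₃ = 1 →
        ({q₀, q₁, q₂, q₃} : Multiset ℝ) = ({p₀, p₁, p₂, p₃} : Multiset ℝ) →
        q₁ ≤ q₀ → q₂ ≤ q₁ → q₃ ≤ q₂ →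
        s ≤ 2 * (Real.sqrt (p₀ * p₁) + Real.sqrt (p₂ * p₃)) →
        (q₀ - q₁) ^ 2 + (q₂ - q₃) ^ 2 ≤ 1 - s ^ 2) ∧
    (∀ q₀ q₁ : ℝ, q₀ = (1 + Real.sqrt (1 - s ^ 2)) / 2 →
        q₁ = (1 - Real.sqrt (1 - s ^ 2)) / 2 →
        (0 ≤ q₀ ∧ 0 ≤ q₁ ∧ q₀ + q₁ + 0 + 0 = 1) ∧
        s ≤ 2 * (Real.sqrt (q₀ * q₁) + Real.sqrt ((0 : ℝ) * 0)) ∧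
        (q₀ - q₁) ^ 2 + ((0 : ℝ) - 0) ^ 2 = 1 - s ^ 2) := by
  constructor
  · intro p₀ p₁ p₂ p₃ q₀ q₁ q₂ q₃ hp₀ hp₁ hp₂ hp₃ hp h h₁ h₂ h₃ hP
    have hq : q₀ + q₁ + q₂ + q₃ = 1 := by
      rw [← hp]
      simpa [add_assoc] using congrArg Multiset.sum h
    have hq₃ : 0 ≤ q₃ := by
      have : q₃ ∈ ({p₀, p₁, p₂, p₃} : Multiset ℝ) := h ▸ by simp
      simp only [Multiset.insert_eq_cons, Multiset.mem_cons, Multiset.mem_singleton] at this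
      rcases this with rfl | rfl | rfl | rfl <;> assumption
    have hsqrt : ({√q₀, √q₁, √q₂, √q₃} : Multiset ℝ) = {√p₀, √p₁, √p₂, √p₃} := by
      simpa using congrArg (Multiset.map Real.sqrt) h
    have hpair := mul_add_mul_le_of_sorted (Real.sqrt_le_sqrt h₁) (Real.sqrt_le_sqrt h₂)
      (Real.sqrt_le_sqrt h₃) hsqrt
    rw [Real.sqrt_mul hp₀, Real.sqrt_mul hp₂] at hP
    have hs : s ^ 2 ≤ (2 * (√q₀ * √q₁ + √q₂ * √q₃)) ^ 2 :=
      pow_le_pow_left₀ hs0 (hP.trans (by linarith)) 2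
    have hQ := sq_two_mul_mul_add_mul_le (√q₀) (√q₁) (√q₂) (√q₃)
    simp only [Real.sq_sqrt (hq₃.trans h₃), Real.sq_sqrt (hq₃.trans (h₃.trans h₂)),
      Real.sq_sqrt (hq₃.trans (h₃.trans (h₂.trans h₁))), Real.sq_sqrt hq₃, hq] at hQ
    linarith
  · rintro q₀ q₁ rfl rfl
    have hr : √(1 - s ^ 2) ^ 2 = 1 - s ^ 2 := Real.sq_sqrt (by nlinarith)
    have hr₁ : √(1 - s ^ 2) ≤ 1 := Real.sqrt_le_one.2 (by nlinarith)
    refine ⟨⟨by positivity, by linarith, by ring⟩, ?_, by linear_combination hr⟩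
    rw [sqrt_one_add_mul_one_sub_sqrt_one_sub_sq hs0 hs1, mul_zero, Real.sqrt_zero]
    linarith
end

section
/- Fix s ∈ [0,1] and a unit vector n = (n₁,n₂,n₃) ∈ ℝ³. The maximum of the local quantum uncertainty L(p) := 1 − max{P₁,P₂,P₃} over all probability vectors p = (p₀,p₁,p₂,p₃) satisfying the compatibility condition (s·n_i = 0 whenever P_i = 0, and the sum of s²n_i²/P_i² over those i with P_i ≠ 0 is at most 1) equals 1 − s; it is attained by the probability vector with p₁ = p₂ = p₃ = (1 + s − √(1 + 2s − 3s²))/8 and p₀ = 1 − 3p₁. -/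
set_option maxHeartbeats 1000000 in
/-- Fix `s ∈ [0,1]` and a unit vector `n = (n₁,n₂,n₃)`. The maximum of the
local quantum uncertainty `L(p) = 1 − max {P₁,P₂,P₃}` over all probability vectors `p`
satisfying the compatibility condition (`s·nᵢ = 0` whenever `Pᵢ = 0`, and the sum of
`s²nᵢ²/Pᵢ²` over the `i` with `Pᵢ ≠ 0` at most `1`) equals `1 − s`; it is attained by
the probability vector with `p₁ = p₂ = p₃ = (1 + s − √(1 + 2s − 3s²))/8`, `p₀ = 1 − 3p₁`. -/
theorem best_lqu_sharpness_tradeoff (s n₁ n₂ n₃ : ℝ)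
    (hs0 : 0 ≤ s) (hs1 : s ≤ 1)
    (hn : n₁ ^ 2 + n₂ ^ 2 + n₃ ^ 2 = 1) :
    (∀ p₀ p₁ p₂ p₃ P₁ P₂ P₃ : ℝ, 0 ≤ p₀ → 0 ≤ p₁ → 0 ≤ p₂ → 0 ≤ p₃ →
        p₀ + p₁ + p₂ + p₃ = 1 →
        P₁ = 2 * (Real.sqrt (p₀ * p₁) + Real.sqrt (p₂ * p₃)) →
        P₂ = 2 * (Real.sqrt (p₀ * p₂) + Real.sqrt (p₁ * p₃)) →
        P₃ = 2 * (Real.sqrt (p₀ * p₃) + Real.sqrt (p₁ * p₂)) →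
        (P₁ = 0 → s * n₁ = 0) → (P₂ = 0 → s * n₂ = 0) → (P₃ = 0 → s * n₃ = 0) →
        (if P₁ = 0 then 0 else s ^ 2 * n₁ ^ 2 / P₁ ^ 2) +
          (if P₂ = 0 then 0 else s ^ 2 * n₂ ^ 2 / P₂ ^ 2) +
          (if P₃ = 0 then 0 else s ^ 2 * n₃ ^ 2 / P₃ ^ 2) ≤ 1 →
        1 - max (max P₁ P₂) P₃ ≤ 1 - s) ∧
    (∀ p₀ p₁ P₁ P₂ P₃ : ℝ,
        p₁ = (1 + s - Real.sqrt (1 + 2 * s - 3 * s ^ 2)) / 8 →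
        p₀ = 1 - 3 * p₁ →
        P₁ = 2 * (Real.sqrt (p₀ * p₁) + Real.sqrt (p₁ * p₁)) →
        P₂ = 2 * (Real.sqrt (p₀ * p₁) + Real.sqrt (p₁ * p₁)) →
        P₃ = 2 * (Real.sqrt (p₀ * p₁) + Real.sqrt (p₁ * p₁)) →
        (0 ≤ p₀ ∧ 0 ≤ p₁ ∧ p₀ + p₁ + p₁ + p₁ = 1) ∧
        ((P₁ = 0 → s * n₁ = 0) ∧ (P₂ = 0 → s * n₂ = 0) ∧ (P₃ = 0 → s * n₃ = 0) ∧
          (if P₁ = 0 then 0 else s ^ 2 * n₁ ^ 2 / P₁ ^ 2) +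
            (if P₂ = 0 then 0 else s ^ 2 * n₂ ^ 2 / P₂ ^ 2) +
            (if P₃ = 0 then 0 else s ^ 2 * n₃ ^ 2 / P₃ ^ 2) ≤ 1) ∧
        1 - max (max P₁ P₂) P₃ = 1 - s) := by
  constructor
  · intro p₀ p₁ p₂ p₃ P₁ P₂ P₃ h0 h1 h2 h3 hsum hP1 hP2 hP3 hz1 hz2 hz3 hcomp
    have hP1n : 0 ≤ P₁ := by
      rw [hP1]; positivity
    have hP2n : 0 ≤ P₂ := by
      rw [hP2]; positivity
    have hP3n : 0 ≤ P₃ := by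
      rw [hP3]; positivity
    set M := max (max P₁ P₂) P₃ with hM
    have hM1 : P₁ ≤ M := le_trans (le_max_left _ _) (le_max_left _ _)
    have hM2 : P₂ ≤ M := le_trans (le_max_right _ _) (le_max_left _ _)
    have hM3 : P₃ ≤ M := le_max_right _ _
    have hMn : 0 ≤ M := le_trans hP1n hM1
    have key : s ≤ M := by
      rcases eq_or_lt_of_le hMn with hM0 | hMpos
      · have e1 : P₁ = 0 := le_antisymm (hM0 ▸ hM1) hP1n
        have e2 : P₂ = 0 := le_antisymm (hM0 ▸ hM2) hP2n
        have e3 : P₃ = 0 := le_antisymm (hM0 ▸ hM3) hP3n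
        have q1 := hz1 e1
        have q2 := hz2 e2
        have q3 := hz3 e3
        have hs2 : s ^ 2 = 0 := by nlinarith [sq_nonneg (s*n₁), sq_nonneg (s*n₂), sq_nonneg (s*n₃)]
        nlinarith
      · have bound : ∀ (P nn : ℝ), 0 ≤ P → P ≤ M → (P = 0 → s * nn = 0) →
            s ^ 2 * nn ^ 2 / M ^ 2 ≤ (if P = 0 then 0 else s ^ 2 * nn ^ 2 / P ^ 2) := by
          intro P nn hPn hPM hPz
          by_cases hP : P = 0
          · have hq := hPz hP
            have hzero : s ^ 2 * nn ^ 2 = 0 := by nlinarith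
            rw [if_pos hP, hzero, zero_div]
          · rw [if_neg hP]
            have hPpos : 0 < P := lt_of_le_of_ne hPn (Ne.symm hP)
            have hPM2 : P ^ 2 ≤ M ^ 2 := by nlinarith
            gcongr
        have b1 := bound P₁ n₁ hP1n hM1 hz1
        have b2 := bound P₂ n₂ hP2n hM2 hz2
        have b3 := bound P₃ n₃ hP3n hM3 hz3
        have hsumle : s ^ 2 * n₁ ^ 2 / M ^ 2 + s ^ 2 * n₂ ^ 2 / M ^ 2 + s ^ 2 * n₃ ^ 2 / M ^ 2 ≤ 1 := by
          linarith
        have hM2pos : 0 < M ^ 2 := by positivity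
        have hs2M : s ^ 2 ≤ M ^ 2 := by
          have : (s ^ 2 * n₁ ^ 2 + s ^ 2 * n₂ ^ 2 + s ^ 2 * n₃ ^ 2) / M ^ 2 ≤ 1 := by
            rw [add_div, add_div]; linarith
          have h2 : s ^ 2 * n₁ ^ 2 + s ^ 2 * n₂ ^ 2 + s ^ 2 * n₃ ^ 2 ≤ M ^ 2 := by
            rw [div_le_one hM2pos] at this; linarith
          nlinarith
        nlinarith
    linarith
  · intro p₀ p₁ P₁ P₂ P₃ hp1 hp0 hP1 hP2 hP3
    set D := Real.sqrt (1 + 2 * s - 3 * s ^ 2) with hD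
    have hD0 : 0 ≤ D := Real.sqrt_nonneg _
    have harg : 0 ≤ 1 + 2 * s - 3 * s ^ 2 := by nlinarith
    have hD2 : D ^ 2 = 1 + 2 * s - 3 * s ^ 2 := Real.sq_sqrt harg
    have hDle : D ≤ 1 + s := by nlinarith [sq_nonneg (D - (1 + s))]
    have hDge : 1 - 3 * s ≤ D := by nlinarith [sq_nonneg (D - (1 - 3*s)), sq_nonneg (D + (1 - 3*s))]
    have hp1n : 0 ≤ p₁ := by rw [hp1]; linarith
    have hp0n : 0 ≤ p₀ := by rw [hp0, hp1]; linarith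
    have hsq : p₀ * p₁ = ((3 * s - 1 + D) / 8) ^ 2 := by
      rw [hp0, hp1]
      linear_combination (-(1:ℝ)/16) * hD2
    have hnum : 0 ≤ (3 * s - 1 + D) / 8 := by linarith
    have hroot : Real.sqrt (p₀ * p₁) = (3 * s - 1 + D) / 8 := by
      rw [hsq, Real.sqrt_sq hnum]
    have hroot2 : Real.sqrt (p₁ * p₁) = p₁ := Real.sqrt_mul_self hp1n
    have hP1s : P₁ = s := by rw [hP1, hroot, hroot2, hp1]; ring
    have hP2s : P₂ = s := by rw [hP2, hroot, hroot2, hp1]; ring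
    have hP3s : P₃ = s := by rw [hP3, hroot, hroot2, hp1]; ring
    refine ⟨⟨hp0n, hp1n, by rw [hp0]; ring⟩, ⟨?_, ?_, ?_, ?_⟩, ?_⟩
    · intro h; rw [hP1s] at h; rw [h, zero_mul]
    · intro h; rw [hP2s] at h; rw [h, zero_mul]
    · intro h; rw [hP3s] at h; rw [h, zero_mul]
    · by_cases hs : s = 0
      · have e1 : P₁ = 0 := by rw [hP1s, hs]
        have e2 : P₂ = 0 := by rw [hP2s, hs]
        have e3 : P₃ = 0 := by rw [hP3s, hs]
        rw [if_pos e1, if_pos e2, if_pos e3]; norm_num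
      · have e1 : P₁ ≠ 0 := by rw [hP1s]; exact hs
        have e2 : P₂ ≠ 0 := by rw [hP2s]; exact hs
        have e3 : P₃ ≠ 0 := by rw [hP3s]; exact hs
        rw [if_neg e1, if_neg e2, if_neg e3, hP1s, hP2s, hP3s]
        have hs2 : s ^ 2 ≠ 0 := pow_ne_zero 2 hs
        have t1 : s ^ 2 * n₁ ^ 2 / s ^ 2 = n₁ ^ 2 := by field_simp
        have t2 : s ^ 2 * n₂ ^ 2 / s ^ 2 = n₂ ^ 2 := by field_simp
        have t3 : s ^ 2 * n₃ ^ 2 / s ^ 2 = n₃ ^ 2 := by field_simp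
        rw [t1, t2, t3]; linarith
    · rw [hP1s, hP2s, hP3s, max_self, max_self]
end

section
/- Let p = (p₀,p₁,p₂,p₃) be a probability vector. Define the four (unnormalized) Bell vectors in ℂ⁴: B₀ = (1,0,0,1)/√2, B₁ = (0,1,1,0)/√2, B₂ = (0,1,−1,0)/√2, B₃ = (1,0,0,−1)/√2, and the 4×4 matrix S := Σ_{m=0}^{3} √(p_m)·B_m B_m†. Then S² equals the Choi–Jamiołkowski matrix of the Pauli channel of p, and for each i ∈ {1,2,3}, Tr(S·(σ_i ⊗ I)·S·(σ_i ⊗ I)) = P_i, where σ_i are the 2×2 Pauli matrices, ⊗ is the Kronecker product, and P_i := 2(√(p₀p_i) + √(p_j p_k)) with (i,j,k) a permutation of (1,2,3). Moreover, for i ≠ j in {1,2,3}, Tr(S·(σ_i ⊗ I)·S·(σ_j ⊗ I)) = 0. -/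
/-!
The Bell vectors `B₀, …, B₃` form an orthonormal basis, so `S = ∑ √pₘ Bₘ Bₘᴴ` is diagonal in
it with eigenvalues `√pₘ`, and `S² = ∑ pₘ Bₘ Bₘᴴ` is the Choi matrix. Each `σᵢ ⊗ I` permutes
the Bell vectors up to phases, `Bₘ ↦ B_{m xor i}`, so conjugating a Bell-diagonal matrix by it
permutes the eigenvalues. Since `Tr (D (A ⊗ I)) = (Tr D / 2) Tr A` for Bell-diagonal `D`, this gives
`Tr (S (σᵢ⊗I) S (σⱼ⊗I)) = ½ (∑ₘ √pₘ √p_{m xor i}) Tr (σᵢ σⱼ)`, which is `Pᵢ` for `i = j`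
and `0` otherwise.
-/

open Matrix

/-- The pair of qubit indices encoded by an index of `Fin 4` (binary expansion),
so that `Fin 4 ≃ Fin 2 × Fin 2` in the standard basis order `00, 01, 10, 11`. -/
def toPair (i : Fin 4) : Fin 2 × Fin 2 :=
  (⟨i.val / 2, by omega⟩, ⟨i.val % 2, by omega⟩)

/-- Kronecker product of two `2 × 2` complex matrices, as a `4 × 4` matrix. -/
def kron (A B : Matrix (Fin 2) (Fin 2) ℂ) : Matrix (Fin 4) (Fin 4) ℂ :=
  Matrix.of fun i j => A (toPair i).1 (toPair j).1 * B (toPair i).2 (toPair j).2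

/-- The inverse of √2, as a complex number. -/
noncomputable def invSqrt2 : ℂ := ((Real.sqrt 2)⁻¹ : ℝ)

def pauli : Fin 3 → Matrix (Fin 2) (Fin 2) ℂ :=
  ![!![0, 1; 1, 0], !![0, -Complex.I; Complex.I, 0], !![1, 0; 0, -1]]

noncomputable def bell : Fin 4 → Fin 4 → ℂ :=
  ![![invSqrt2, 0, 0, invSqrt2], ![0, invSqrt2, invSqrt2, 0],
    ![0, invSqrt2, -invSqrt2, 0], ![invSqrt2, 0, 0, -invSqrt2]]

-- Eigenvalue `s m` on the Bell vector `bell m`.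
noncomputable def bellDiag (s : Fin 4 → ℂ) : Matrix (Fin 4) (Fin 4) ℂ :=
  (1 / 2 : ℂ) • !![s 0 + s 3, 0, 0, s 0 - s 3; 0, s 1 + s 2, s 1 - s 2, 0;
    0, s 1 - s 2, s 1 + s 2, 0; s 0 - s 3, 0, 0, s 0 + s 3]

lemma invSqrt2_mul_self : invSqrt2 * invSqrt2 = 1 / 2 := by
  rw [invSqrt2, ← Complex.ofReal_mul, ← mul_inv, Real.mul_self_sqrt zero_le_two]
  norm_num

lemma star_invSqrt2 : star invSqrt2 = invSqrt2 := Complex.conj_ofReal _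

lemma sum_smul_vecMulVec_bell (s : Fin 4 → ℂ) :
    ∑ m, s m • vecMulVec (bell m) (star (bell m)) = bellDiag s := by
  ext i j
  fin_cases i <;> fin_cases j <;>
    simp [bell, bellDiag, Fin.sum_univ_four, vecMulVec_apply, star_invSqrt2,
      invSqrt2_mul_self, -cons_vecMulVec, -vecMulVec_cons] <;> ring

lemma bellDiag_mul_bellDiag (s t : Fin 4 → ℂ) : bellDiag s * bellDiag t = bellDiag (s * t) := by
  ext i j
  fin_cases i <;> fin_cases j <;> simp [bellDiag, mul_apply, Fin.sum_univ_four] <;> ring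

lemma pauli_mul_self (i : Fin 3) : pauli i * pauli i = 1 := by
  fin_cases i <;> ext a b <;> fin_cases a <;> fin_cases b <;> simp [pauli]

lemma trace_pauli_mul_pauli_of_ne {i j : Fin 3} (h : i ≠ j) : trace (pauli i * pauli j) = 0 := by
  fin_cases i <;> fin_cases j <;> simp_all [pauli, trace]

lemma kron_mul_kron (A B C D : Matrix (Fin 2) (Fin 2) ℂ) :
    kron A B * kron C D = kron (A * C) (B * D) := by
  ext i j
  fin_cases i <;> fin_cases j <;>
    simp [kron, toPair, mul_apply, Fin.sum_univ_four, Fin.sum_univ_two] <;> ring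

-- `σᵢ₊₁ ⊗ I` sends the Bell vector `bell m` to `bell (m ^^^ (i + 1))` up to a phase.
lemma kron_pauli_mul_bellDiag_mul_kron_pauli (i : Fin 3) (t : Fin 4 → ℂ) :
    kron (pauli i) 1 * bellDiag t * kron (pauli i) 1 = bellDiag (fun m => t (m ^^^ i.succ)) := by
  fin_cases i <;> ext a b <;> fin_cases a <;> fin_cases b <;>
    simp [pauli, bellDiag, kron, toPair, mul_apply, Fin.sum_univ_four, one_apply] <;>
    ring_nf <;> simp only [Complex.I_sq] <;> ring

lemma trace_bellDiag_mul_kron_one (r : Fin 4 → ℂ) (A : Matrix (Fin 2) (Fin 2) ℂ) :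
    trace (bellDiag r * kron A 1) = (∑ m, r m) / 2 * trace A := by
  simp only [trace, diag, mul_apply, Fin.sum_univ_four]
  simp [bellDiag, kron, toPair, one_apply]
  ring

-- Writing `σⱼ ⊗ I = (σᵢ ⊗ I)(σᵢσⱼ ⊗ I)` exposes the conjugate `(σᵢ ⊗ I) T (σᵢ ⊗ I)`.
lemma trace_bellDiag_mul_kron_pauli_mul_bellDiag_mul_kron_pauli (s t : Fin 4 → ℂ)
    (i j : Fin 3) :
    trace (bellDiag s * kron (pauli i) 1 * bellDiag t * kron (pauli j) 1) =
      (∑ m, s m * t (m ^^^ i.succ)) / 2 * trace (pauli i * pauli j) := by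
  have hsplit : kron (pauli j) 1 = kron (pauli i) 1 * kron (pauli i * pauli j) 1 := by
    rw [kron_mul_kron, ← Matrix.mul_assoc, pauli_mul_self, one_mul, one_mul]
  rw [hsplit, ← Matrix.mul_assoc, Matrix.mul_assoc (bellDiag s), Matrix.mul_assoc (bellDiag s),
    kron_pauli_mul_bellDiag_mul_kron_pauli, bellDiag_mul_bellDiag, trace_bellDiag_mul_kron_one]
  simp only [Pi.mul_apply]

theorem choi_sqrt_W_matrix_general (p : Fin 4 → ℝ)
    (hp : ∀ m, 0 ≤ p m)
    (B : Fin 4 → Fin 4 → ℂ)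
    (hB0 : B 0 = ![invSqrt2, 0, 0, invSqrt2])
    (hB1 : B 1 = ![0, invSqrt2, invSqrt2, 0])
    (hB2 : B 2 = ![0, invSqrt2, -invSqrt2, 0])
    (hB3 : B 3 = ![invSqrt2, 0, 0, -invSqrt2])
    (S : Matrix (Fin 4) (Fin 4) ℂ)
    (hS : S = ∑ m : Fin 4, (Real.sqrt (p m) : ℂ) • Matrix.vecMulVec (B m) (star (B m)))
    (σ : Fin 3 → Matrix (Fin 2) (Fin 2) ℂ)
    (hσ : σ = ![!![0, 1; 1, 0], !![0, -Complex.I; Complex.I, 0], !![1, 0; 0, -1]])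
    (P : Fin 3 → ℝ)
    (hP : P = ![2 * (Real.sqrt (p 0 * p 1) + Real.sqrt (p 2 * p 3)),
                2 * (Real.sqrt (p 0 * p 2) + Real.sqrt (p 1 * p 3)),
                2 * (Real.sqrt (p 0 * p 3) + Real.sqrt (p 1 * p 2))]) :
    S * S = (1 / 2 : ℂ) •
        !![((p 0 + p 3 : ℝ) : ℂ), 0, 0, ((p 0 - p 3 : ℝ) : ℂ);
           0, ((p 1 + p 2 : ℝ) : ℂ), ((p 1 - p 2 : ℝ) : ℂ), 0;
           0, ((p 1 - p 2 : ℝ) : ℂ), ((p 1 + p 2 : ℝ) : ℂ), 0;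
           ((p 0 - p 3 : ℝ) : ℂ), 0, 0, ((p 0 + p 3 : ℝ) : ℂ)] ∧
    (∀ i : Fin 3,
      Matrix.trace (S * kron (σ i) 1 * S * kron (σ i) 1) = ((P i : ℝ) : ℂ)) ∧
    (∀ i j : Fin 3, i ≠ j →
      Matrix.trace (S * kron (σ i) 1 * S * kron (σ j) 1) = 0) := by
  have hB : B = bell := by
    funext m
    fin_cases m <;> assumption
  set s : Fin 4 → ℂ := fun m => (Real.sqrt (p m) : ℂ)
  have hSs : S = bellDiag s := by rw [hS, hB, sum_smul_vecMulVec_bell]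
  have hss : s * s = fun m => (p m : ℂ) := by
    funext m
    simp only [s, Pi.mul_apply, ← Complex.ofReal_mul, Real.mul_self_sqrt (hp m)]
  have hsqrt (m n : Fin 4) : ((Real.sqrt (p m * p n) : ℝ) : ℂ) = s m * s n := by
    rw [Real.sqrt_mul (hp m), Complex.ofReal_mul]
  change σ = pauli at hσ
  subst hσ hP hSs
  refine ⟨?_, fun i => ?_, fun i j hij => ?_⟩
  · rw [bellDiag_mul_bellDiag, hss, bellDiag]
    push_cast
    rfl
  · rw [trace_bellDiag_mul_kron_pauli_mul_bellDiag_mul_kron_pauli, pauli_mul_self, trace_one]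
    fin_cases i <;> simp [Fin.sum_univ_four, hsqrt] <;> ring
  · rw [trace_bellDiag_mul_kron_pauli_mul_bellDiag_mul_kron_pauli,
      trace_pauli_mul_pauli_of_ne hij, mul_zero]

/-- For a probability vector `p`, with the Bell vectors `B₀,…,B₃` and
`S = Σ_m √(p_m) B_m B_m†`, the matrix `S²` equals the Choi–Jamiołkowski matrix of the
Pauli channel of `p`; moreover `Tr(S (σᵢ⊗I) S (σᵢ⊗I)) = Pᵢ` for `i ∈ {1,2,3}` and
`Tr(S (σᵢ⊗I) S (σⱼ⊗I)) = 0` for `i ≠ j`. -/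
theorem choi_sqrt_W_matrix (p : Fin 4 → ℝ)
    (hp : ∀ m, 0 ≤ p m) (hsum : p 0 + p 1 + p 2 + p 3 = 1)
    (B : Fin 4 → Fin 4 → ℂ)
    (hB0 : B 0 = ![invSqrt2, 0, 0, invSqrt2])
    (hB1 : B 1 = ![0, invSqrt2, invSqrt2, 0])
    (hB2 : B 2 = ![0, invSqrt2, -invSqrt2, 0])
    (hB3 : B 3 = ![invSqrt2, 0, 0, -invSqrt2])
    (S : Matrix (Fin 4) (Fin 4) ℂ)
    (hS : S = ∑ m : Fin 4, (Real.sqrt (p m) : ℂ) • Matrix.vecMulVec (B m) (star (B m)))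
    (σ : Fin 3 → Matrix (Fin 2) (Fin 2) ℂ)
    (hσ : σ = ![!![0, 1; 1, 0], !![0, -Complex.I; Complex.I, 0], !![1, 0; 0, -1]])
    (P : Fin 3 → ℝ)
    (hP : P = ![2 * (Real.sqrt (p 0 * p 1) + Real.sqrt (p 2 * p 3)),
                2 * (Real.sqrt (p 0 * p 2) + Real.sqrt (p 1 * p 3)),
                2 * (Real.sqrt (p 0 * p 3) + Real.sqrt (p 1 * p 2))]) :
    S * S = (1 / 2 : ℂ) •
        !![((p 0 + p 3 : ℝ) : ℂ), 0, 0, ((p 0 - p 3 : ℝ) : ℂ);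
           0, ((p 1 + p 2 : ℝ) : ℂ), ((p 1 - p 2 : ℝ) : ℂ), 0;
           0, ((p 1 - p 2 : ℝ) : ℂ), ((p 1 + p 2 : ℝ) : ℂ), 0;
           ((p 0 - p 3 : ℝ) : ℂ), 0, 0, ((p 0 + p 3 : ℝ) : ℂ)] ∧
    (∀ i : Fin 3,
      Matrix.trace (S * kron (σ i) 1 * S * kron (σ i) 1) = ((P i : ℝ) : ℂ)) ∧
    (∀ i j : Fin 3, i ≠ j →
      Matrix.trace (S * kron (σ i) 1 * S * kron (σ j) 1) = 0) :=
  choi_sqrt_W_matrix_general p hp B hB0 hB1 hB2 hB3 S hS σ hσ P hP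
end
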